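/- arXiv:2509.23496 — 9 statements merged into one kernel-verified Lean document; each statement's English description precedes it below -/
import Mathlib

section
/- Let d ≥ 1 be an integer, let 0 < γ < 1, let δ > 1/γ, and let ρ be a soft profile with decay exponent δ. Then there exist constants 0 < c' ≤ C' < ∞ (depending only on d, γ, δ and the constants in the definition of ρ) such that for every u ∈ (0,1] and every R ≥ 2 one has c'·min(u^{−1} R^{d(1−1/γ)}, 1) ≤ min( ∫_{{x ∈ ℝ^d : |x| ≥ R}} ∫_0^1 ρ(|x|^d (u v)^γ) dv dx , 1 ) ≤ C'·min(u^{−1} R^{d(1−1/γ)}, 1). -/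
/-!
Substituting `t = v / w` with `w = u⁻¹ r^(-d/γ)` turns the inner integral at distance `r` into
`w ∫₀^{1/w} ρ(t^γ) dt`. As `ρ(t^γ) ≤ C t^(-γδ)` with `γδ > 1`, the profile `t ↦ ρ(t^γ)` is
integrable on `(0, ∞)`, so the inner integral lies between `ρ(1) min(1, w)` and a constant times
`w`. In polar coordinates the outer integral is `d κ ∫_R^∞ r^(d-1) (⋯) dr`, `κ` the volume of
the unit ball. Since `d/γ > d`, the upper bound integrates to a multiple of
`u⁻¹ R^(d - d/γ)`, while the shell `R < r ≤ 2R` alone contributes at least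
`R^d ρ(1) min(1, u⁻¹ (2R)^(-d/γ)) ≥ ρ(1) 2^(-d/γ) min(u⁻¹ R^(d - d/γ), 1)` when `R ≥ 1`.
-/

open MeasureTheory Real Set

section DecayingProfile

variable {g : ℝ → ℝ} {β C : ℝ}

lemma intervalIntegrable_of_antitoneOn_Ici {a b : ℝ} (hg : AntitoneOn g (Ici 0))
    (ha : 0 ≤ a) (hb : 0 ≤ b) : IntervalIntegrable g volume a b :=
  (hg.mono fun _ ht => le_trans (le_min ha hb) ht.1).intervalIntegrable

lemma intervalIntegrable_comp_div (hg : AntitoneOn g (Ici 0)) {w : ℝ} (hw : 0 < w) :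
    IntervalIntegrable (fun v => g (v / w)) volume 0 1 := by
  refine AntitoneOn.intervalIntegrable fun v hv v' hv' hvv' => ?_
  rw [uIcc_of_le zero_le_one] at hv hv'
  exact hg (div_nonneg hv.1 hw.le) (div_nonneg hv'.1 hw.le)
    (div_le_div_of_nonneg_right hvv' hw.le)

lemma integral_le_one_add_div_of_le_rpow (hg0 : ∀ t, 0 ≤ t → 0 ≤ g t)
    (hg1 : ∀ t, 0 ≤ t → g t ≤ 1) (hg : AntitoneOn g (Ici 0))
    (hgC : ∀ t, 1 ≤ t → g t ≤ C * t ^ (-β)) (hβ : 1 < β) {T : ℝ} (hT : 0 ≤ T) :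
    ∫ t in 0..T, g t ≤ 1 + C / (β - 1) := by
  have hC : 0 ≤ C := by simpa using (hg0 1 zero_le_one).trans (hgC 1 le_rfl)
  set T' := max T 1
  have hT' : 1 ≤ T' := le_max_right T 1
  have h01 : ∫ t in 0..1, g t ≤ 1 := by
    simpa using intervalIntegral.integral_mono_on zero_le_one
      (intervalIntegrable_of_antitoneOn_Ici hg le_rfl zero_le_one) intervalIntegrable_const
      fun t ht => hg1 t ht.1
  have h1T : ∫ t in 1..T', g t ≤ C / (β - 1) := by
    have hpow : ∫ t in 1..T', t ^ (-β) = (1 - T' ^ (1 - β)) / (β - 1) := by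
      rw [integral_rpow (Or.inr ⟨by linarith, fun h => by
        rw [uIcc_of_le hT'] at h; linarith [h.1]⟩), one_rpow,
        div_eq_div_iff (by linarith) (by linarith)]
      ring_nf
    calc ∫ t in 1..T', g t ≤ ∫ t in 1..T', C * t ^ (-β) :=
          intervalIntegral.integral_mono_on hT'
            (intervalIntegrable_of_antitoneOn_Ici hg zero_le_one (by linarith))
            ((intervalIntegral.intervalIntegrable_rpow (Or.inr fun h => by
              rw [uIcc_of_le hT'] at h; linarith [h.1])).const_mul C)
            fun t ht => hgC t ht.1
      _ = C * ((1 - T' ^ (1 - β)) / (β - 1)) := by rw [intervalIntegral.integral_const_mul, hpow]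
      _ ≤ C * (1 / (β - 1)) := by
          gcongr
          linarith [rpow_nonneg (zero_le_one.trans hT') (1 - β)]
      _ = C / (β - 1) := by ring
  calc ∫ t in 0..T, g t ≤ ∫ t in 0..T', g t :=
        intervalIntegral.integral_mono_interval le_rfl hT (le_max_left T 1)
          (ae_restrict_of_forall_mem measurableSet_Ioc fun t ht => hg0 t ht.1.le)
          (intervalIntegrable_of_antitoneOn_Ici hg le_rfl (by linarith))
    _ = (∫ t in 0..1, g t) + ∫ t in 1..T', g t :=
        (intervalIntegral.integral_add_adjacent_intervals
          (intervalIntegrable_of_antitoneOn_Ici hg le_rfl zero_le_one)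
          (intervalIntegrable_of_antitoneOn_Ici hg zero_le_one (by linarith))).symm
    _ ≤ 1 + C / (β - 1) := add_le_add h01 h1T

lemma integral_comp_div_le (hg0 : ∀ t, 0 ≤ t → 0 ≤ g t)
    (hg1 : ∀ t, 0 ≤ t → g t ≤ 1) (hg : AntitoneOn g (Ici 0))
    (hgC : ∀ t, 1 ≤ t → g t ≤ C * t ^ (-β)) (hβ : 1 < β) {w : ℝ} (hw : 0 < w) :
    ∫ v in 0..1, g (v / w) ≤ (1 + C / (β - 1)) * w := by
  rw [intervalIntegral.integral_comp_div _ hw.ne', zero_div, smul_eq_mul, mul_comm]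
  exact mul_le_mul_of_nonneg_right
    (integral_le_one_add_div_of_le_rpow hg0 hg1 hg hgC hβ (by positivity)) hw.le

lemma mul_min_le_integral_comp_div (hg0 : ∀ t, 0 ≤ t → 0 ≤ g t) (hg : AntitoneOn g (Ici 0))
    {w : ℝ} (hw : 0 < w) : g 1 * min 1 w ≤ ∫ v in 0..1, g (v / w) := by
  set m := min 1 w
  have hm : 0 ≤ m := le_min zero_le_one hw.le
  calc g 1 * m = ∫ _ in 0..m, g 1 := by simp [mul_comm]
    _ ≤ ∫ v in 0..m, g (v / w) :=
        intervalIntegral.integral_mono_on hm intervalIntegrable_const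
          ((intervalIntegrable_comp_div hg hw).mono_set (by
            rw [uIcc_of_le hm, uIcc_of_le zero_le_one]
            exact Icc_subset_Icc le_rfl (min_le_left 1 w)))
          fun v hv => hg (div_nonneg hv.1 hw.le) (mem_Ici.2 zero_le_one)
            ((div_le_one hw).2 (hv.2.trans (min_le_right 1 w)))
    _ ≤ ∫ v in 0..1, g (v / w) :=
        intervalIntegral.integral_mono_interval le_rfl hm (min_le_left 1 w)
          (ae_restrict_of_forall_mem measurableSet_Ioc fun v hv =>
            hg0 _ (div_nonneg hv.1.le hw.le))
          (intervalIntegrable_comp_div hg hw)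

lemma monotoneOn_integral_comp_div (hg : AntitoneOn g (Ici 0)) :
    MonotoneOn (fun w => ∫ v in 0..1, g (v / w)) (Ioi 0) := fun _ hw _ hw' hww' =>
  intervalIntegral.integral_mono_on zero_le_one (intervalIntegrable_comp_div hg hw)
    (intervalIntegrable_comp_div hg hw') fun _ hv =>
      hg (div_nonneg hv.1 (le_of_lt hw')) (div_nonneg hv.1 (le_of_lt hw))
        (div_le_div_of_nonneg_left hv.1 hw hww')

end DecayingProfile

section Radial

variable {E F : Type*} [NormedAddCommGroup E] [NormedSpace ℝ E] [FiniteDimensional ℝ E]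
  [Nontrivial E] [MeasurableSpace E] [BorelSpace E] [NormedAddCommGroup F] [NormedSpace ℝ F]

lemma setIntegral_fun_norm_addHaar_of_le_norm (μ : Measure E) [μ.IsAddHaarMeasure]
    (f : ℝ → F) {R : ℝ} (hR : 0 < R) :
    ∫ x in {x | R ≤ ‖x‖}, f ‖x‖ ∂μ = Module.finrank ℝ E • μ.real (Metric.ball 0 1) •
      ∫ r in Ioi R, r ^ (Module.finrank ℝ E - 1) • f r := by
  have hpolar := integral_fun_norm_addHaar μ ((Ici R).indicator f)
  have hindicator : ∀ r : ℝ, r ^ (Module.finrank ℝ E - 1) • (Ici R).indicator f r =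
      (Ici R).indicator (fun r => r ^ (Module.finrank ℝ E - 1) • f r) r := fun r =>
    (indicator_const_smul_apply _ _ _ _).symm
  rw [← integral_indicator (measurableSet_le measurable_const measurable_norm)]
  simp_rw [hindicator] at hpolar
  rw [integral_indicator measurableSet_Ici, Measure.restrict_restrict measurableSet_Ici,
    inter_eq_self_of_subset_left (Ici_subset_Ioi.2 hR),
    integral_Ici_eq_integral_Ioi] at hpolar
  exact hpolar

end Radial

section Tail

variable {F : ℝ → ℝ} {n : ℕ} {p A R : ℝ}

lemma pow_sub_one_mul_rpow_neg {r : ℝ} (hr : 0 < r) (hn : 1 ≤ n) :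
    r ^ (n - 1) * r ^ (-p) = r ^ ((n : ℝ) - 1 - p) := by
  rw [← rpow_natCast, ← rpow_add hr, Nat.cast_sub hn, Nat.cast_one, sub_eq_add_neg _ p]

lemma integrableOn_pow_mul_Ioi (hF : AntitoneOn F (Ioi R)) (hF0 : ∀ r ∈ Ioi R, 0 ≤ F r)
    (hFA : ∀ r ∈ Ioi R, F r ≤ A * r ^ (-p)) (hn : 1 ≤ n) (hnp : n < p) (hR : 0 < R) :
    IntegrableOn (fun r => r ^ (n - 1) * F r) (Ioi R) := by
  refine Integrable.mono'
    ((integrableOn_Ioi_rpow_of_lt (a := (n : ℝ) - 1 - p) (by linarith) hR).const_mul A)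
    ((continuous_pow _).aemeasurable.mul
      (aemeasurable_restrict_of_antitoneOn measurableSet_Ioi hF)).aestronglyMeasurable
    (ae_restrict_of_forall_mem measurableSet_Ioi fun r hr => ?_)
  have hr0 : 0 < r := hR.trans hr
  rw [norm_of_nonneg (mul_nonneg (pow_nonneg hr0.le _) (hF0 r hr)),
    ← pow_sub_one_mul_rpow_neg hr0 hn]
  calc r ^ (n - 1) * F r ≤ r ^ (n - 1) * (A * r ^ (-p)) := by gcongr; exact hFA r hr
    _ = A * (r ^ (n - 1) * r ^ (-p)) := by ring

lemma setIntegral_pow_mul_Ioi_le (hF : AntitoneOn F (Ioi R)) (hF0 : ∀ r ∈ Ioi R, 0 ≤ F r)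
    (hFA : ∀ r ∈ Ioi R, F r ≤ A * r ^ (-p)) (hn : 1 ≤ n) (hnp : n < p) (hR : 0 < R) :
    ∫ r in Ioi R, r ^ (n - 1) * F r ≤ A * R ^ ((n : ℝ) - p) / (p - n) := by
  calc ∫ r in Ioi R, r ^ (n - 1) * F r ≤ ∫ r in Ioi R, A * r ^ ((n : ℝ) - 1 - p) :=
        setIntegral_mono_on (integrableOn_pow_mul_Ioi hF hF0 hFA hn hnp hR)
          ((integrableOn_Ioi_rpow_of_lt (by linarith) hR).const_mul A) measurableSet_Ioi
          fun r hr => by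
            rw [← pow_sub_one_mul_rpow_neg (hR.trans hr) hn, mul_left_comm]
            exact mul_le_mul_of_nonneg_left (hFA r hr) (pow_nonneg (hR.trans hr).le _)
    _ = A * R ^ ((n : ℝ) - p) / (p - n) := by
        rw [integral_const_mul, integral_Ioi_rpow_of_lt (by linarith) hR,
          show (n : ℝ) - 1 - p + 1 = n - p by ring, neg_div, ← div_neg, neg_sub, mul_div_assoc]

lemma pow_mul_le_setIntegral_pow_mul_Ioi (hF : AntitoneOn F (Ioi R))
    (hF0 : ∀ r ∈ Ioi R, 0 ≤ F r) (hFA : ∀ r ∈ Ioi R, F r ≤ A * r ^ (-p)) (hn : 1 ≤ n)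
    (hnp : n < p) (hR : 0 < R) :
    R ^ n * F (2 * R) ≤ ∫ r in Ioi R, r ^ (n - 1) * F r := by
  have h2R : 2 * R ∈ Ioi R := by simp only [mem_Ioi]; linarith
  have hint := integrableOn_pow_mul_Ioi hF hF0 hFA hn hnp hR
  calc R ^ n * F (2 * R) = ∫ _ in Ioc R (2 * R), R ^ (n - 1) * F (2 * R) := by
        rw [setIntegral_const, measureReal_def, Real.volume_Ioc,
          ENNReal.toReal_ofReal (by linarith), smul_eq_mul, ← mul_assoc,
          show 2 * R - R = R by ring, mul_comm R, pow_sub_one_mul (by omega)]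
    _ ≤ ∫ r in Ioc R (2 * R), r ^ (n - 1) * F r :=
        setIntegral_mono_on (integrableOn_const measure_Ioc_lt_top.ne)
          (hint.mono_set Ioc_subset_Ioi_self) measurableSet_Ioc fun r hr =>
            mul_le_mul (pow_le_pow_left₀ hR.le hr.1.le _)
              (hF (Ioc_subset_Ioi_self hr) h2R hr.2) (hF0 _ h2R)
              (pow_nonneg (hR.trans hr.1).le _)
    _ ≤ ∫ r in Ioi R, r ^ (n - 1) * F r :=
        setIntegral_mono_set hint
          (ae_restrict_of_forall_mem measurableSet_Ioi fun r hr =>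
            mul_nonneg (pow_nonneg (hR.trans hr).le _) (hF0 r hr))
          Ioc_subset_Ioi_self.eventuallyLE

end Tail

lemma rpow_neg_mul_min_le_pow_mul_min {d : ℕ} {p X R : ℝ} (hp : 0 ≤ p) (hR : 1 ≤ R) :
    2 ^ (-p) * min (X * R ^ ((d : ℝ) - p)) 1 ≤ R ^ d * min 1 (X * (2 * R) ^ (-p)) := by
  have hR0 : 0 < R := zero_lt_one.trans_le hR
  have h2p : (2 : ℝ) ^ (-p) ≤ 1 := rpow_le_one_of_one_le_of_nonpos one_le_two (by linarith)
  have hscale : R ^ d * (X * (2 * R) ^ (-p)) = 2 ^ (-p) * (X * R ^ ((d : ℝ) - p)) := by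
    rw [mul_rpow zero_le_two hR0.le, rpow_sub hR0, rpow_natCast, rpow_neg hR0.le]
    field_simp
  rw [mul_min_of_nonneg _ _ (pow_nonneg hR0.le d), mul_one, hscale]
  refine le_min ?_ (mul_le_mul_of_nonneg_left (min_le_left _ _) (by positivity))
  calc 2 ^ (-p) * min (X * R ^ ((d : ℝ) - p)) 1 ≤ 2 ^ (-p) * 1 :=
        mul_le_mul_of_nonneg_left (min_le_right _ _) (by positivity)
    _ ≤ R ^ d := by rw [mul_one]; exact h2p.trans (one_le_pow₀ hR)

lemma mul_min_one_le_min_one {a M I : ℝ} (hM : 0 ≤ M) (h : a * min M 1 ≤ I) :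
    min a 1 * min M 1 ≤ min I 1 :=
  le_min ((mul_le_mul_of_nonneg_right (min_le_left _ _) (le_min hM zero_le_one)).trans h)
    (mul_le_one₀ (min_le_right _ _) (le_min hM zero_le_one) (min_le_right _ _))

lemma min_one_le_max_mul_min_one {A M I : ℝ} (hM : 0 ≤ M) (h : I ≤ A * M) :
    min I 1 ≤ max A 1 * min M 1 := by
  rcases le_total M 1 with hM1 | hM1
  · rw [min_eq_left hM1]
    exact (min_le_left _ _).trans (h.trans (mul_le_mul_of_nonneg_right (le_max_left _ _) hM))
  · rw [min_eq_right hM1, mul_one]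
    exact (min_le_right _ _).trans (le_max_right _ _)

noncomputable def connectionProbability (ρ : ℝ → ℝ) (d : ℕ) (γ u r : ℝ) : ℝ :=
  ∫ v in Ioc (0 : ℝ) 1, ρ (r ^ d * (u * v) ^ γ)

section ConnectionProbability

variable {ρ : ℝ → ℝ} {d : ℕ} {γ δ C u : ℝ}

lemma pow_mul_mul_rpow_eq_div_rpow (hγ : 0 < γ) (hu : 0 < u) {r v : ℝ} (hr : 0 < r)
    (hv : 0 ≤ v) : r ^ d * (u * v) ^ γ = (v / (u⁻¹ * r ^ (-(d / γ)))) ^ γ := by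
  have hdiv : v / (u⁻¹ * r ^ (-(d / γ))) = u * v * r ^ ((d : ℝ) / γ) := by
    rw [rpow_neg hr.le]
    field_simp
  rw [hdiv, mul_rpow (mul_nonneg hu.le hv) (rpow_nonneg hr.le _), ← rpow_mul hr.le,
    div_mul_cancel₀ _ hγ.ne', rpow_natCast, mul_comm]

lemma connectionProbability_eq_integral_comp_div (hγ : 0 < γ) (hu : 0 < u) {r : ℝ}
    (hr : 0 < r) : connectionProbability ρ d γ u r =
      ∫ v in 0..1, (fun t => ρ (t ^ γ)) (v / (u⁻¹ * r ^ (-(d / γ)))) := by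
  rw [intervalIntegral.integral_of_le zero_le_one]
  exact setIntegral_congr_fun measurableSet_Ioc fun v hv => by
    rw [pow_mul_mul_rpow_eq_div_rpow hγ hu hr hv.1.le]

lemma antitoneOn_comp_rpow (hρ_mono : AntitoneOn ρ (Ici 0)) (hγ : 0 < γ) :
    AntitoneOn (fun t => ρ (t ^ γ)) (Ici 0) := fun _ ht _ ht' htt' =>
  hρ_mono (rpow_nonneg ht γ) (rpow_nonneg ht' γ) (rpow_le_rpow ht htt' hγ.le)

lemma connectionProbability_le (hρ_range : ∀ x, 0 ≤ x → 0 ≤ ρ x ∧ ρ x ≤ 1)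
    (hρ_mono : AntitoneOn ρ (Ici 0)) (hρ_le : ∀ x, 1 ≤ x → ρ x ≤ C * x ^ (-δ))
    (hγ : 0 < γ) (hγδ : 1 < γ * δ) (hu : 0 < u) {r : ℝ} (hr : 0 < r) :
    connectionProbability ρ d γ u r ≤ (1 + C / (γ * δ - 1)) * u⁻¹ * r ^ (-(d / γ)) := by
  rw [connectionProbability_eq_integral_comp_div hγ hu hr, mul_assoc]
  refine integral_comp_div_le (fun t ht => (hρ_range _ (rpow_nonneg ht γ)).1)
    (fun t ht => (hρ_range _ (rpow_nonneg ht γ)).2) (antitoneOn_comp_rpow hρ_mono hγ)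
    (fun t ht => ?_) hγδ (by positivity)
  have ht0 : 0 ≤ t := zero_le_one.trans ht
  calc ρ (t ^ γ) ≤ C * (t ^ γ) ^ (-δ) := hρ_le _ (one_le_rpow ht hγ.le)
    _ = C * t ^ (-(γ * δ)) := by rw [← rpow_mul ht0, mul_neg]

lemma mul_min_le_connectionProbability (hρ_range : ∀ x, 0 ≤ x → 0 ≤ ρ x ∧ ρ x ≤ 1)
    (hρ_mono : AntitoneOn ρ (Ici 0)) (hγ : 0 < γ) (hu : 0 < u) {r : ℝ} (hr : 0 < r) :
    ρ 1 * min 1 (u⁻¹ * r ^ (-(d / γ))) ≤ connectionProbability ρ d γ u r := by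
  rw [connectionProbability_eq_integral_comp_div hγ hu hr]
  simpa using mul_min_le_integral_comp_div (fun t ht => (hρ_range _ (rpow_nonneg ht γ)).1)
    (antitoneOn_comp_rpow hρ_mono hγ) (w := u⁻¹ * r ^ (-(d / γ))) (by positivity)

lemma connectionProbability_nonneg (hρ_range : ∀ x, 0 ≤ x → 0 ≤ ρ x ∧ ρ x ≤ 1)
    (hu : 0 ≤ u) {r : ℝ} (hr : 0 ≤ r) : 0 ≤ connectionProbability ρ d γ u r :=
  setIntegral_nonneg measurableSet_Ioc fun _ hv =>
    (hρ_range _ (mul_nonneg (pow_nonneg hr d) (rpow_nonneg (mul_nonneg hu hv.1.le) γ))).1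

lemma antitoneOn_connectionProbability (hρ_mono : AntitoneOn ρ (Ici 0)) (hγ : 0 < γ)
    (hu : 0 < u) : AntitoneOn (connectionProbability ρ d γ u) (Ioi 0) := by
  intro r (hr : 0 < r) r' (hr' : 0 < r') hrr'
  rw [connectionProbability_eq_integral_comp_div hγ hu hr,
    connectionProbability_eq_integral_comp_div hγ hu hr']
  refine monotoneOn_integral_comp_div (antitoneOn_comp_rpow hρ_mono hγ)
    (show 0 < u⁻¹ * r' ^ (-(d / γ)) by positivity)
    (show 0 < u⁻¹ * r ^ (-(d / γ)) by positivity) ?_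
  have : 0 ≤ (d : ℝ) / γ := by positivity
  exact mul_le_mul_of_nonneg_left (rpow_le_rpow_of_nonpos hr hrr' (by linarith))
    (inv_nonneg.2 hu.le)

end ConnectionProbability

section Exterior

variable {E : Type*} [NormedAddCommGroup E] [NormedSpace ℝ E] [FiniteDimensional ℝ E]
  [Nontrivial E] [MeasurableSpace E] [BorelSpace E] (μ : Measure E) [μ.IsAddHaarMeasure]
  {ρ : ℝ → ℝ} {d : ℕ} {γ δ C u R : ℝ}

lemma setIntegral_connectionProbability_eq (hE : Module.finrank ℝ E = d) (hR : 0 < R) :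
    ∫ x in {x : E | R ≤ ‖x‖}, connectionProbability ρ d γ u ‖x‖ ∂μ = d *
      μ.real (Metric.ball 0 1) * ∫ r in Ioi R, r ^ (d - 1) * connectionProbability ρ d γ u r := by
  simp only [setIntegral_fun_norm_addHaar_of_le_norm μ _ hR, hE, nsmul_eq_mul, smul_eq_mul,
    mul_assoc]

lemma setIntegral_connectionProbability_le (hE : Module.finrank ℝ E = d)
    (hρ_range : ∀ x, 0 ≤ x → 0 ≤ ρ x ∧ ρ x ≤ 1) (hρ_mono : AntitoneOn ρ (Ici 0))
    (hρ_le : ∀ x, 1 ≤ x → ρ x ≤ C * x ^ (-δ)) (hγ0 : 0 < γ) (hγ1 : γ < 1) (hγδ : 1 < γ * δ)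
    (hu : 0 < u) (hR : 0 < R) :
    ∫ x in {x : E | R ≤ ‖x‖}, connectionProbability ρ d γ u ‖x‖ ∂μ ≤
      d * μ.real (Metric.ball 0 1) * (1 + C / (γ * δ - 1)) / (d / γ - d) *
        (u⁻¹ * R ^ ((d : ℝ) * (1 - 1 / γ))) := by
  have hd : 1 ≤ d := hE ▸ Module.finrank_pos
  have hdp : (d : ℝ) < d / γ := (lt_div_iff₀ hγ0).2 (mul_lt_of_lt_one_right (by positivity) hγ1)
  have htail := setIntegral_pow_mul_Ioi_le (A := (1 + C / (γ * δ - 1)) * u⁻¹)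
    ((antitoneOn_connectionProbability hρ_mono hγ0 hu).mono (Ioi_subset_Ioi hR.le))
    (fun r hr => connectionProbability_nonneg hρ_range hu.le (hR.trans hr).le)
    (fun r hr => connectionProbability_le hρ_range hρ_mono hρ_le hγ0 hγδ hu (hR.trans hr))
    hd hdp hR
  rw [setIntegral_connectionProbability_eq μ hE hR]
  calc _ ≤ d * μ.real (Metric.ball 0 1) *
        ((1 + C / (γ * δ - 1)) * u⁻¹ * R ^ ((d : ℝ) - d / γ) / (d / γ - d)) := by gcongr
    _ = _ := by rw [show (d : ℝ) * (1 - 1 / γ) = d - d / γ by ring]; ring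

lemma mul_min_le_setIntegral_connectionProbability (hE : Module.finrank ℝ E = d)
    (hρ_range : ∀ x, 0 ≤ x → 0 ≤ ρ x ∧ ρ x ≤ 1) (hρ_mono : AntitoneOn ρ (Ici 0))
    (hρ_le : ∀ x, 1 ≤ x → ρ x ≤ C * x ^ (-δ)) (hγ0 : 0 < γ) (hγ1 : γ < 1) (hγδ : 1 < γ * δ)
    (hu : 0 < u) (hR : 1 ≤ R) :
    d * μ.real (Metric.ball 0 1) * ρ 1 * 2 ^ (-(d / γ)) *
        min (u⁻¹ * R ^ ((d : ℝ) * (1 - 1 / γ))) 1 ≤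
      ∫ x in {x : E | R ≤ ‖x‖}, connectionProbability ρ d γ u ‖x‖ ∂μ := by
  have hR0 : 0 < R := zero_lt_one.trans_le hR
  have hd : 1 ≤ d := hE ▸ Module.finrank_pos
  have hdp : (d : ℝ) < d / γ := (lt_div_iff₀ hγ0).2 (mul_lt_of_lt_one_right (by positivity) hγ1)
  have htail := pow_mul_le_setIntegral_pow_mul_Ioi (A := (1 + C / (γ * δ - 1)) * u⁻¹)
    ((antitoneOn_connectionProbability hρ_mono hγ0 hu).mono (Ioi_subset_Ioi hR0.le))
    (fun r hr => connectionProbability_nonneg hρ_range hu.le (hR0.trans hr).le)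
    (fun r hr => connectionProbability_le hρ_range hρ_mono hρ_le hγ0 hγδ hu (hR0.trans hr))
    hd hdp hR0
  have hρ1 : 0 ≤ ρ 1 := (hρ_range 1 zero_le_one).1
  rw [setIntegral_connectionProbability_eq μ hE hR0,
    show (d : ℝ) * (1 - 1 / γ) = d - d / γ by ring]
  calc _ = d * μ.real (Metric.ball 0 1) *
        (ρ 1 * (2 ^ (-(d / γ)) * min (u⁻¹ * R ^ ((d : ℝ) - d / γ)) 1)) := by ring
    _ ≤ d * μ.real (Metric.ball 0 1) *
        (ρ 1 * (R ^ d * min 1 (u⁻¹ * (2 * R) ^ (-(d / γ))))) := by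
      gcongr _ * (_ * ?_)
      exact rpow_neg_mul_min_le_pow_mul_min (by positivity) hR
    _ = d * μ.real (Metric.ball 0 1) *
        (R ^ d * (ρ 1 * min 1 (u⁻¹ * (2 * R) ^ (-(d / γ))))) := by ring
    _ ≤ d * μ.real (Metric.ball 0 1) * (R ^ d * connectionProbability ρ d γ u (2 * R)) := by
      gcongr
      exact mul_min_le_connectionProbability hρ_range hρ_mono hγ0 hu (by positivity)
    _ ≤ _ := by gcongr

end Exterior

theorem stmt_1_general (d : ℕ) (hd : 1 ≤ d) (γ δ : ℝ) (hγ0 : 0 < γ) (hγ1 : γ < 1)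
    (hδ : 1 / γ < δ)
    (ρ : ℝ → ℝ) (c C : ℝ) (hc : 0 < c)
    (hρ_range : ∀ x : ℝ, 0 ≤ x → 0 ≤ ρ x ∧ ρ x ≤ 1)
    (hρ_mono : AntitoneOn ρ (Ici (0 : ℝ)))
    (hρ_bound : ∀ x : ℝ, 1 ≤ x → c * x ^ (-δ) ≤ ρ x ∧ ρ x ≤ C * x ^ (-δ)) :
    ∃ c' C' : ℝ, 0 < c' ∧ c' ≤ C' ∧ ∀ u R : ℝ, u ∈ Ioc (0 : ℝ) 1 → 2 ≤ R →
      c' * min (u⁻¹ * R ^ ((d : ℝ) * (1 - 1 / γ))) 1 ≤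
          min (∫ x in {x : EuclideanSpace ℝ (Fin d) | R ≤ ‖x‖},
              ∫ v in Ioc (0 : ℝ) 1, ρ (‖x‖ ^ d * (u * v) ^ γ)) 1 ∧
      min (∫ x in {x : EuclideanSpace ℝ (Fin d) | R ≤ ‖x‖},
              ∫ v in Ioc (0 : ℝ) 1, ρ (‖x‖ ^ d * (u * v) ^ γ)) 1 ≤
          C' * min (u⁻¹ * R ^ ((d : ℝ) * (1 - 1 / γ))) 1 := by
  have hE : Module.finrank ℝ (EuclideanSpace ℝ (Fin d)) = d := finrank_euclideanSpace_fin
  have : Nontrivial (EuclideanSpace ℝ (Fin d)) :=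
    Module.nontrivial_of_finrank_pos (R := ℝ) (by rw [hE]; exact hd)
  have hd0 : (0 : ℝ) < d := by exact_mod_cast hd
  have hγδ : 1 < γ * δ := by rwa [div_lt_iff₀' hγ0] at hδ
  have hρ_le : ∀ x, 1 ≤ x → ρ x ≤ C * x ^ (-δ) := fun x hx => (hρ_bound x hx).2
  have hρ1 : 0 < ρ 1 := hc.trans_le (by simpa using (hρ_bound 1 le_rfl).1)
  set κ := volume.real (Metric.ball (0 : EuclideanSpace ℝ (Fin d)) 1)
  have hκ : 0 < κ :=
    ENNReal.toReal_pos (Metric.measure_ball_pos _ _ one_pos).ne' measure_ball_lt_top.ne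
  refine ⟨min (d * κ * ρ 1 * 2 ^ (-(d / γ))) 1, max (d * κ * (1 + C / (γ * δ - 1)) / (d / γ - d)) 1,
    lt_min (by positivity) one_pos, (min_le_right _ _).trans (le_max_right _ _),
    fun u R hu hR => ⟨?_, ?_⟩⟩
  · exact mul_min_one_le_min_one (by have := hu.1; positivity)
      (mul_min_le_setIntegral_connectionProbability volume hE hρ_range hρ_mono hρ_le hγ0 hγ1
        hγδ hu.1 (by linarith))
  · exact min_one_le_max_mul_min_one (by have := hu.1; positivity)
      (setIntegral_connectionProbability_le volume hE hρ_range hρ_mono hρ_le hγ0 hγ1 hγδ hu.1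
        (by linarith))

/-- One-edge escape probability asymptotics for a soft profile in the regime `δ > 1/γ`:
the expected number of direct connections of a vertex with mark `u` at the origin to
vertices outside `B(0,R)`, truncated at 1, is of order `min(u⁻¹ R^{d(1-1/γ)}, 1)`. -/
theorem stmt_1 (d : ℕ) (hd : 1 ≤ d) (γ δ : ℝ) (hγ0 : 0 < γ) (hγ1 : γ < 1)
    (hδ : 1 / γ < δ)
    (ρ : ℝ → ℝ) (c C : ℝ) (hc : 0 < c) (hcC : c ≤ C)
    (hρ_range : ∀ x : ℝ, 0 ≤ x → 0 ≤ ρ x ∧ ρ x ≤ 1)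
    (hρ_mono : AntitoneOn ρ (Ici (0 : ℝ)))
    (hρ_bound : ∀ x : ℝ, 1 ≤ x → c * x ^ (-δ) ≤ ρ x ∧ ρ x ≤ C * x ^ (-δ)) :
    ∃ c' C' : ℝ, 0 < c' ∧ c' ≤ C' ∧ ∀ u R : ℝ, u ∈ Ioc (0 : ℝ) 1 → 2 ≤ R →
      c' * min (u⁻¹ * R ^ ((d : ℝ) * (1 - 1 / γ))) 1 ≤
          min (∫ x in {x : EuclideanSpace ℝ (Fin d) | R ≤ ‖x‖},
              ∫ v in Ioc (0 : ℝ) 1, ρ (‖x‖ ^ d * (u * v) ^ γ)) 1 ∧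
      min (∫ x in {x : EuclideanSpace ℝ (Fin d) | R ≤ ‖x‖},
              ∫ v in Ioc (0 : ℝ) 1, ρ (‖x‖ ^ d * (u * v) ^ γ)) 1 ≤
          C' * min (u⁻¹ * R ^ ((d : ℝ) * (1 - 1 / γ))) 1 :=
  stmt_1_general d hd γ δ hγ0 hγ1 hδ ρ c C hc hρ_range hρ_mono hρ_bound
end

section
/- Let d ≥ 1 be an integer, let 0 < γ < 1, let 1 < δ < 1/γ, and let ρ be a soft profile with decay exponent δ. Then there exist constants 0 < c' ≤ C' < ∞ (depending only on d, γ, δ and the constants in the definition of ρ) such that for every u ∈ (0,1] and every R ≥ 2 one has c'·min(u^{−γδ} R^{d(1−δ)}, 1) ≤ min( ∫_{{x ∈ ℝ^d : |x| ≥ R}} ∫_0^1 ρ(|x|^d (u v)^γ) dv dx , 1 ) ≤ C'·min(u^{−γδ} R^{d(1−δ)}, 1). -/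
/-!
Since `c y^{-δ} ≤ ρ y` for `y ≥ 1` and `ρ y ≤ max C 1 · y^{-δ}` for `y > 0`, the inner integral
over the mark `v` is comparable to `(‖x‖^d u^γ)^{-δ} = u^{-γδ} ‖x‖^{-dδ}`: for the upper bound
one integrates `v^{-γδ}`, which is finite because `γδ < 1`; the lower bound uses that `ρ` is
antitone and holds once `‖x‖^d u^γ ≥ 1`. In polar coordinates `∫_{‖x‖ ≥ T} ‖x‖^{-dδ}` is a
constant times `T^{d(1-δ)}`. For the lower bound take `T = R` if `R^d u^γ ≥ 1`, and otherwise
`T = u^{-γ/d}`, where the bound becomes a constant times `u^{-γ} ≥ 1`.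
-/

open MeasureTheory Real Set Metric

lemma rpow_neg_pow_mul_rpow {r u : ℝ} (hr : 0 ≤ r) (hu : 0 ≤ u) (k : ℕ) (γ δ : ℝ) :
    (r ^ k * u ^ γ) ^ (-δ) = u ^ (-(γ * δ)) * r ^ (-(k * δ)) := by
  rw [mul_rpow (by positivity) (by positivity), ← rpow_natCast, ← rpow_mul hr, ← rpow_mul hu,
    mul_comm, neg_mul_eq_mul_neg, neg_mul_eq_mul_neg]

lemma setIntegral_Ioc_zero_one_rpow {s : ℝ} (hs : -1 < s) :
    ∫ v in Ioc (0 : ℝ) 1, v ^ s = 1 / (s + 1) := by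
  rw [← intervalIntegral.integral_of_le zero_le_one, integral_rpow (.inl hs),
    one_rpow, zero_rpow (by linarith), sub_zero]

lemma min_le_max_mul_min {I A M : ℝ} (hM : 0 ≤ M) (h : I ≤ A * M) :
    min I 1 ≤ max A 1 * min M 1 := by
  rcases le_total M 1 with hM1 | hM1
  · rw [min_eq_left hM1]
    exact (min_le_left _ _).trans (h.trans (mul_le_mul_of_nonneg_right (le_max_left _ _) hM))
  · rw [min_eq_right hM1, mul_one]
    exact (min_le_right _ _).trans (le_max_right _ _)

lemma min_mul_min_le_min {I B M : ℝ} (hM : 0 ≤ M) (h : B * min M 1 ≤ I) :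
    min B 1 * min M 1 ≤ min I 1 := by
  have hM' : 0 ≤ min M 1 := le_min hM zero_le_one
  refine le_min ?_ ?_
  · exact (mul_le_mul_of_nonneg_right (min_le_left _ _) hM').trans h
  · exact mul_le_one₀ (min_le_right _ _) hM' (min_le_right _ _)

/-- `y` stands for `‖x‖ ^ d`; the mark `v` of the other endpoint is uniform on `(0, 1]`. -/
noncomputable def averagedProfile (ρ : ℝ → ℝ) (γ u y : ℝ) : ℝ :=
  ∫ v in Ioc (0 : ℝ) 1, ρ (y * (u * v) ^ γ)

section AveragedProfile

variable {ρ : ℝ → ℝ} {γ δ c C u y : ℝ}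

lemma le_max_one_mul_rpow_neg (h1 : ∀ y, ρ y ≤ 1) (hub : ∀ y, 1 ≤ y → ρ y ≤ C * y ^ (-δ))
    (hδ : 0 ≤ δ) (hy : 0 < y) : ρ y ≤ max C 1 * y ^ (-δ) := by
  rcases le_or_gt 1 y with hy1 | hy1
  · exact (hub y hy1).trans (mul_le_mul_of_nonneg_right (le_max_left _ _) (by positivity))
  · calc ρ y ≤ 1 * 1 := by simpa using h1 y
      _ ≤ max C 1 * y ^ (-δ) :=
        mul_le_mul (le_max_right _ _) (one_le_rpow_of_pos_of_le_one_of_nonpos hy hy1.le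
          (by linarith)) zero_le_one (by positivity)

lemma averagedProfile_nonneg (h0 : ∀ y, 0 ≤ ρ y) : 0 ≤ averagedProfile ρ γ u y :=
  integral_nonneg fun _ => h0 _

lemma averagedProfile_le (h0 : ∀ y, 0 ≤ ρ y) (h1 : ∀ y, ρ y ≤ 1)
    (hub : ∀ y, 1 ≤ y → ρ y ≤ C * y ^ (-δ)) (hδ : 0 ≤ δ) (hγδ : γ * δ < 1)
    (hu : 0 < u) (hy : 0 < y) :
    averagedProfile ρ γ u y ≤ max C 1 / (1 - γ * δ) * (y * u ^ γ) ^ (-δ) := by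
  have hint : IntegrableOn (fun v : ℝ => v ^ (-(γ * δ))) (Ioc 0 1) := by
    rw [← intervalIntegrable_iff_integrableOn_Ioc_of_le zero_le_one]
    exact intervalIntegral.intervalIntegrable_rpow' (by linarith)
  calc averagedProfile ρ γ u y
      ≤ ∫ v in Ioc (0 : ℝ) 1, max C 1 * (y * u ^ γ) ^ (-δ) * v ^ (-(γ * δ)) := by
        refine integral_mono_of_nonneg (.of_forall fun _ => h0 _) (hint.const_mul _) ?_
        filter_upwards [ae_restrict_mem measurableSet_Ioc] with v ⟨hv0, _⟩
        calc ρ (y * (u * v) ^ γ) ≤ max C 1 * ((y * u ^ γ) * v ^ γ) ^ (-δ) := by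
              rw [mul_rpow hu.le hv0.le, ← mul_assoc]
              exact le_max_one_mul_rpow_neg h1 hub hδ (by positivity)
          _ = max C 1 * (y * u ^ γ) ^ (-δ) * v ^ (-(γ * δ)) := by
              rw [mul_rpow (by positivity) (by positivity), ← rpow_mul hv0.le, mul_assoc,
                neg_mul_eq_mul_neg]
    _ = max C 1 / (1 - γ * δ) * (y * u ^ γ) ^ (-δ) := by
        rw [integral_const_mul, setIntegral_Ioc_zero_one_rpow (by linarith)]
        ring

lemma le_averagedProfile (hρ : Antitone ρ) (h0 : ∀ y, 0 ≤ ρ y) (h1 : ∀ y, ρ y ≤ 1)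
    (hlb : ∀ y, 1 ≤ y → c * y ^ (-δ) ≤ ρ y) (hγ : 0 ≤ γ) (hu : 0 < u) (hy : 0 ≤ y)
    (hyu : 1 ≤ y * u ^ γ) :
    c * (y * u ^ γ) ^ (-δ) ≤ averagedProfile ρ γ u y := by
  have hint : IntegrableOn (fun v => ρ (y * (u * v) ^ γ)) (Ioc 0 1) := by
    refine .of_bound measure_Ioc_lt_top (hρ.measurable.comp (by fun_prop)).aestronglyMeasurable 1
      (.of_forall fun v => ?_)
    rw [norm_of_nonneg (h0 _)]
    exact h1 _
  calc c * (y * u ^ γ) ^ (-δ) ≤ ρ (y * u ^ γ) := hlb _ hyu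
    _ = ∫ _ in Ioc (0 : ℝ) 1, ρ (y * u ^ γ) := by simp
    _ ≤ averagedProfile ρ γ u y := by
        refine integral_mono_of_nonneg (.of_forall fun _ => h0 _) hint ?_
        filter_upwards [ae_restrict_mem measurableSet_Ioc] with v ⟨hv0, hv1⟩
        refine hρ (mul_le_mul_of_nonneg_left (rpow_le_rpow (by positivity) ?_ hγ) hy)
        exact mul_le_of_le_one_right hu.le hv1

lemma measurable_averagedProfile_pow (hρ : Antitone ρ) (k : ℕ) :
    Measurable fun r => averagedProfile ρ γ u (r ^ k) :=
  (hρ.measurable.comp (by fun_prop) : Measurable fun q : ℝ × ℝ => ρ (q.1 ^ k * (u * q.2) ^ γ))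
    |>.stronglyMeasurable.integral_prod_right'.measurable

lemma averagedProfile_pow_le (h0 : ∀ y, 0 ≤ ρ y) (h1 : ∀ y, ρ y ≤ 1)
    (hub : ∀ y, 1 ≤ y → ρ y ≤ C * y ^ (-δ)) (hδ : 0 ≤ δ) (hγδ : γ * δ < 1) (hu : 0 < u)
    (k : ℕ) {r : ℝ} (hr : 0 < r) :
    averagedProfile ρ γ u (r ^ k) ≤ max C 1 / (1 - γ * δ) * u ^ (-(γ * δ)) * r ^ (-(k * δ)) := by
  have := averagedProfile_le h0 h1 hub hδ hγδ hu (pow_pos hr k)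
  rwa [rpow_neg_pow_mul_rpow hr.le hu.le, ← mul_assoc] at this

lemma le_averagedProfile_pow (hρ : Antitone ρ) (h0 : ∀ y, 0 ≤ ρ y) (h1 : ∀ y, ρ y ≤ 1)
    (hlb : ∀ y, 1 ≤ y → c * y ^ (-δ) ≤ ρ y) (hγ : 0 ≤ γ) (hu : 0 < u) (k : ℕ) {r : ℝ}
    (hr : 0 ≤ r) (hru : 1 ≤ r ^ k * u ^ γ) :
    c * u ^ (-(γ * δ)) * r ^ (-(k * δ)) ≤ averagedProfile ρ γ u (r ^ k) := by
  have := le_averagedProfile hρ h0 h1 hlb hγ hu (pow_nonneg hr k) hru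
  rwa [rpow_neg_pow_mul_rpow hr hu.le, ← mul_assoc] at this

lemma averagedProfile_comp_max_zero (hu : 0 ≤ u) (hy : 0 ≤ y) :
    averagedProfile (fun y => ρ (max y 0)) γ u y = averagedProfile ρ γ u y := by
  refine setIntegral_congr_fun measurableSet_Ioc fun v hv => ?_
  dsimp only
  rw [max_eq_left (mul_nonneg hy (rpow_nonneg (mul_nonneg hu hv.1.le) γ))]

end AveragedProfile

lemma AntitoneOn.antitone_comp_max_zero {ρ : ℝ → ℝ} (hρ : AntitoneOn ρ (Ici 0)) :
    Antitone fun y => ρ (max y 0) := fun a b hab =>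
  hρ (le_max_right a 0) (le_max_right b 0) (max_le_max_right 0 hab)

lemma eqOn_pow_smul_indicator_rpow {k : ℕ} (hk : 1 ≤ k) (T p : ℝ) :
    EqOn (fun y : ℝ => y ^ (k - 1) • (Ici T).indicator (fun r => r ^ (-p)) y)
      ((Ici T).indicator fun y => y ^ ((k : ℝ) - 1 - p)) (Ioi 0) := by
  intro y hy
  by_cases hyT : y ∈ Ici T
  · simp only [indicator_of_mem hyT, smul_eq_mul]
    rw [← rpow_natCast, ← rpow_add hy, Nat.cast_sub hk, Nat.cast_one, sub_eq_add_neg _ p]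
  · simp [indicator_of_notMem hyT]

section NormTail

variable {E : Type*} [NormedAddCommGroup E] [NormedSpace ℝ E] [MeasurableSpace E] (μ : Measure E)

local notation "dim" => Module.finrank ℝ

noncomputable def normTailConst (p : ℝ) : ℝ := dim E * μ.real (ball 0 1) / (p - dim E)

variable [FiniteDimensional ℝ E] [Nontrivial E] [μ.IsAddHaarMeasure] {p T : ℝ}

lemma normTailConst_pos (hp : (dim E : ℝ) < p) : 0 < normTailConst μ p := by
  have : 0 < μ.real (ball 0 1) :=
    ENNReal.toReal_pos (measure_ball_pos μ 0 one_pos).ne' measure_ball_lt_top.ne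
  have : 0 < dim E := Module.finrank_pos
  unfold normTailConst
  exact div_pos (by positivity) (by linarith)

variable [BorelSpace E]

lemma integrableOn_norm_rpow_neg (hp : (dim E : ℝ) < p) (hT : 0 < T) :
    IntegrableOn (fun x : E => ‖x‖ ^ (-p)) {x | T ≤ ‖x‖} μ := by
  rw [← integrable_indicator_iff (measurableSet_le measurable_const measurable_norm)]
  change Integrable (fun x => (Ici T).indicator (fun r : ℝ => r ^ (-p)) ‖x‖) μ
  rw [integrable_fun_norm_addHaar, integrableOn_congr_fun
    (eqOn_pow_smul_indicator_rpow Module.finrank_pos T p) measurableSet_Ioi]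
  refine (integrable_indicator_iff measurableSet_Ici).2 ?_ |>.integrableOn
  rw [integrableOn_Ici_iff_integrableOn_Ioi]
  exact integrableOn_Ioi_rpow_of_lt (by linarith) hT

lemma setIntegral_norm_rpow_neg (hp : (dim E : ℝ) < p) (hT : 0 < T) :
    ∫ x in {x : E | T ≤ ‖x‖}, ‖x‖ ^ (-p) ∂μ = normTailConst μ p * T ^ ((dim E : ℝ) - p) := by
  rw [← integral_indicator (measurableSet_le measurable_const measurable_norm)]
  change ∫ x, (Ici T).indicator (fun r : ℝ => r ^ (-p)) ‖x‖ ∂μ = _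
  rw [integral_fun_norm_addHaar, setIntegral_congr_fun measurableSet_Ioi
      (eqOn_pow_smul_indicator_rpow Module.finrank_pos T p),
    integral_indicator measurableSet_Ici, Measure.restrict_restrict measurableSet_Ici,
    inter_eq_left.2 (Ici_subset_Ioi.2 hT), integral_Ici_eq_integral_Ioi,
    integral_Ioi_rpow_of_lt (by linarith) hT]
  have : p - dim E ≠ 0 := by linarith
  rw [normTailConst, nsmul_eq_mul, smul_eq_mul, show (dim E : ℝ) - 1 - p + 1 = -(p - dim E) by ring]
  field_simp
  ring_nf

variable {h : ℝ → ℝ} {A B T' : ℝ}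

lemma integrableOn_comp_norm_of_le (hh : Measurable h) (hp : (dim E : ℝ) < p) (hT : 0 < T)
    (hbound : ∀ r, T ≤ r → ‖h r‖ ≤ A * r ^ (-p)) :
    IntegrableOn (fun x : E => h ‖x‖) {x | T ≤ ‖x‖} μ :=
  ((integrableOn_norm_rpow_neg μ hp hT).const_mul A).mono'
    (hh.comp measurable_norm).aestronglyMeasurable
    (ae_restrict_of_forall_mem (measurableSet_le measurable_const measurable_norm)
      fun _ hx => hbound _ hx)

lemma setIntegral_comp_norm_le (hint : IntegrableOn (fun x : E => h ‖x‖) {x | T ≤ ‖x‖} μ)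
    (hp : (dim E : ℝ) < p) (hT : 0 < T) (hbound : ∀ r, T ≤ r → h r ≤ A * r ^ (-p)) :
    ∫ x in {x : E | T ≤ ‖x‖}, h ‖x‖ ∂μ ≤ A * normTailConst μ p * T ^ ((dim E : ℝ) - p) := by
  calc ∫ x in {x : E | T ≤ ‖x‖}, h ‖x‖ ∂μ ≤ ∫ x in {x : E | T ≤ ‖x‖}, A * ‖x‖ ^ (-p) ∂μ :=
        setIntegral_mono_on hint ((integrableOn_norm_rpow_neg μ hp hT).const_mul A)
          (measurableSet_le measurable_const measurable_norm) fun _ hx => hbound _ hx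
    _ = A * normTailConst μ p * T ^ ((dim E : ℝ) - p) := by
        rw [integral_const_mul, setIntegral_norm_rpow_neg μ hp hT, mul_assoc]

lemma le_setIntegral_comp_norm (hint : IntegrableOn (fun x : E => h ‖x‖) {x | T ≤ ‖x‖} μ)
    (h0 : ∀ r, T ≤ r → 0 ≤ h r) (hp : (dim E : ℝ) < p) (hT : 0 < T) (hTT' : T ≤ T')
    (hbound : ∀ r, T' ≤ r → B * r ^ (-p) ≤ h r) :
    B * normTailConst μ p * T' ^ ((dim E : ℝ) - p) ≤ ∫ x in {x : E | T ≤ ‖x‖}, h ‖x‖ ∂μ := by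
  have hsub : {x : E | T' ≤ ‖x‖} ⊆ {x | T ≤ ‖x‖} := fun x hx => hTT'.trans hx
  have hT' : 0 < T' := hT.trans_le hTT'
  calc B * normTailConst μ p * T' ^ ((dim E : ℝ) - p)
      = ∫ x in {x : E | T' ≤ ‖x‖}, B * ‖x‖ ^ (-p) ∂μ := by
        rw [integral_const_mul, setIntegral_norm_rpow_neg μ hp hT', mul_assoc]
    _ ≤ ∫ x in {x : E | T' ≤ ‖x‖}, h ‖x‖ ∂μ :=
        setIntegral_mono_on ((integrableOn_norm_rpow_neg μ hp hT').const_mul B) (hint.mono_set hsub)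
          (measurableSet_le measurable_const measurable_norm) fun _ hx => hbound _ hx
    _ ≤ ∫ x in {x : E | T ≤ ‖x‖}, h ‖x‖ ∂μ :=
        setIntegral_mono_set hint
          (ae_restrict_of_forall_mem (measurableSet_le measurable_const measurable_norm)
            fun _ hx => h0 _ hx) hsub.eventuallyLE

end NormTail

lemma finrank_lt_finrank_mul (E : Type*) [AddCommGroup E] [Module ℝ E] [FiniteDimensional ℝ E]
    [Nontrivial E] {δ : ℝ} (hδ : 1 < δ) :
    (Module.finrank ℝ E : ℝ) < Module.finrank ℝ E * δ :=
  lt_mul_of_one_lt_right (by exact_mod_cast Module.finrank_pos) hδ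

section Escape

variable {E : Type*} [NormedAddCommGroup E] [NormedSpace ℝ E] [FiniteDimensional ℝ E]
  [MeasurableSpace E] [BorelSpace E] [Nontrivial E] (μ : Measure E) [μ.IsAddHaarMeasure]
  {ρ : ℝ → ℝ} {γ δ c C u R : ℝ}

local notation "dim" => Module.finrank ℝ

lemma integrableOn_averagedProfile_norm_pow (hρ : Antitone ρ) (h0 : ∀ y, 0 ≤ ρ y)
    (h1 : ∀ y, ρ y ≤ 1) (hub : ∀ y, 1 ≤ y → ρ y ≤ C * y ^ (-δ)) (hδ : 1 < δ)
    (hγδ : γ * δ < 1) (hu : 0 < u) (hR : 0 < R) :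
    IntegrableOn (fun x : E => averagedProfile ρ γ u (‖x‖ ^ dim E)) {x | R ≤ ‖x‖} μ :=
  integrableOn_comp_norm_of_le μ (h := fun r => averagedProfile ρ γ u (r ^ dim E))
    (measurable_averagedProfile_pow hρ _)
    (finrank_lt_finrank_mul E hδ) hR fun r hr => by
      rw [norm_of_nonneg (averagedProfile_nonneg h0)]
      exact averagedProfile_pow_le h0 h1 hub (by linarith) hγδ hu _ (hR.trans_le hr)

lemma setIntegral_averagedProfile_le (hρ : Antitone ρ) (h0 : ∀ y, 0 ≤ ρ y)
    (h1 : ∀ y, ρ y ≤ 1) (hub : ∀ y, 1 ≤ y → ρ y ≤ C * y ^ (-δ)) (hδ : 1 < δ)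
    (hγδ : γ * δ < 1) (hu : 0 < u) (hR : 0 < R) :
    ∫ x in {x : E | R ≤ ‖x‖}, averagedProfile ρ γ u (‖x‖ ^ dim E) ∂μ ≤
      max C 1 / (1 - γ * δ) * normTailConst μ (dim E * δ) *
        (u ^ (-(γ * δ)) * R ^ ((dim E : ℝ) * (1 - δ))) := by
  have := setIntegral_comp_norm_le μ (h := fun r => averagedProfile ρ γ u (r ^ dim E))
    (integrableOn_averagedProfile_norm_pow μ hρ h0 h1 hub hδ hγδ hu hR)
    (finrank_lt_finrank_mul E hδ) hR fun r hr =>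
      averagedProfile_pow_le h0 h1 hub (by linarith) hγδ hu _ (hR.trans_le hr)
  rw [mul_one_sub]
  linarith

lemma le_setIntegral_averagedProfile_of_le (hρ : Antitone ρ) (h0 : ∀ y, 0 ≤ ρ y)
    (h1 : ∀ y, ρ y ≤ 1) (hub : ∀ y, 1 ≤ y → ρ y ≤ C * y ^ (-δ))
    (hlb : ∀ y, 1 ≤ y → c * y ^ (-δ) ≤ ρ y) (hγ : 0 ≤ γ) (hδ : 1 < δ) (hγδ : γ * δ < 1)
    (hu : 0 < u) (hR : 0 < R) {T : ℝ} (hRT : R ≤ T) (hTu : 1 ≤ T ^ dim E * u ^ γ) :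
    c * normTailConst μ (dim E * δ) * (u ^ (-(γ * δ)) * T ^ ((dim E : ℝ) * (1 - δ))) ≤
      ∫ x in {x : E | R ≤ ‖x‖}, averagedProfile ρ γ u (‖x‖ ^ dim E) ∂μ := by
  have := le_setIntegral_comp_norm μ (h := fun r => averagedProfile ρ γ u (r ^ dim E))
    (integrableOn_averagedProfile_norm_pow μ hρ h0 h1 hub hδ hγδ hu hR)
    (fun _ _ => averagedProfile_nonneg h0) (finrank_lt_finrank_mul E hδ) hR hRT fun r hr => by
      refine le_averagedProfile_pow hρ h0 h1 hlb hγ hu _ (hR.le.trans (hRT.trans hr)) ?_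
      exact hTu.trans (mul_le_mul_of_nonneg_right
        (pow_le_pow_left₀ (hR.le.trans hRT) hr _) (by positivity))
  rw [mul_one_sub]
  linarith

lemma mul_min_le_setIntegral_averagedProfile (hρ : Antitone ρ) (h0 : ∀ y, 0 ≤ ρ y)
    (h1 : ∀ y, ρ y ≤ 1) (hub : ∀ y, 1 ≤ y → ρ y ≤ C * y ^ (-δ))
    (hlb : ∀ y, 1 ≤ y → c * y ^ (-δ) ≤ ρ y) (hc : 0 ≤ c) (hγ : 0 ≤ γ) (hδ : 1 < δ)
    (hγδ : γ * δ < 1) (hu : 0 < u) (hu1 : u ≤ 1) (hR : 0 < R) :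
    c * normTailConst μ (dim E * δ) * min (u ^ (-(γ * δ)) * R ^ ((dim E : ℝ) * (1 - δ))) 1 ≤
      ∫ x in {x : E | R ≤ ‖x‖}, averagedProfile ρ γ u (‖x‖ ^ dim E) ∂μ := by
  have hcκ : 0 ≤ c * normTailConst μ (dim E * δ) :=
    mul_nonneg hc (normTailConst_pos μ (finrank_lt_finrank_mul E hδ)).le
  rcases le_or_gt 1 (R ^ dim E * u ^ γ) with hRu | hRu
  · exact (mul_le_mul_of_nonneg_left (min_le_left _ _) hcκ).trans
      (le_setIntegral_averagedProfile_of_le μ hρ h0 h1 hub hlb hγ hδ hγδ hu hR le_rfl hRu)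
  have hdim : (dim E : ℝ) ≠ 0 := by exact_mod_cast Module.finrank_pos.ne'
  set T := u ^ (-(γ / dim E))
  have hTu : T ^ dim E * u ^ γ = 1 := by
    rw [← rpow_natCast, ← rpow_mul hu.le, ← rpow_add hu, neg_mul, div_mul_cancel₀ _ hdim,
      neg_add_cancel, rpow_zero]
  have hRT : R ≤ T := (lt_of_pow_lt_pow_left₀ _ (by positivity)
    (lt_of_mul_lt_mul_right (hRu.trans_eq hTu.symm) (by positivity))).le
  have hval : u ^ (-(γ * δ)) * T ^ ((dim E : ℝ) * (1 - δ)) = u ^ (-γ) := by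
    rw [← rpow_mul hu.le, ← rpow_add hu]
    congr 1
    field_simp
    ring
  calc c * normTailConst μ (dim E * δ) * min (u ^ (-(γ * δ)) * R ^ ((dim E : ℝ) * (1 - δ))) 1
      ≤ c * normTailConst μ (dim E * δ) * u ^ (-γ) :=
        mul_le_mul_of_nonneg_left ((min_le_right _ _).trans
          (one_le_rpow_of_pos_of_le_one_of_nonpos hu hu1 (by linarith))) hcκ
    _ ≤ ∫ x in {x : E | R ≤ ‖x‖}, averagedProfile ρ γ u (‖x‖ ^ dim E) ∂μ :=
        hval ▸ le_setIntegral_averagedProfile_of_le μ hρ h0 h1 hub hlb hγ hδ hγδ hu hR hRT hTu.ge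

end Escape

theorem stmt_2_general (d : ℕ) (hd : 1 ≤ d) (γ δ : ℝ) (hγ0 : 0 < γ)
    (hδ1 : 1 < δ) (hδ2 : δ < 1 / γ)
    (ρ : ℝ → ℝ) (c C : ℝ) (hc : 0 < c)
    (hρ_range : ∀ x : ℝ, 0 ≤ x → 0 ≤ ρ x ∧ ρ x ≤ 1)
    (hρ_mono : AntitoneOn ρ (Ici (0 : ℝ)))
    (hρ_bound : ∀ x : ℝ, 1 ≤ x → c * x ^ (-δ) ≤ ρ x ∧ ρ x ≤ C * x ^ (-δ)) :
    ∃ c' C' : ℝ, 0 < c' ∧ c' ≤ C' ∧ ∀ u R : ℝ, u ∈ Ioc (0 : ℝ) 1 → 2 ≤ R →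
      c' * min (u ^ (-(γ * δ)) * R ^ ((d : ℝ) * (1 - δ))) 1 ≤
          min (∫ x in {x : EuclideanSpace ℝ (Fin d) | R ≤ ‖x‖},
              ∫ v in Ioc (0 : ℝ) 1, ρ (‖x‖ ^ d * (u * v) ^ γ)) 1 ∧
      min (∫ x in {x : EuclideanSpace ℝ (Fin d) | R ≤ ‖x‖},
              ∫ v in Ioc (0 : ℝ) 1, ρ (‖x‖ ^ d * (u * v) ^ γ)) 1 ≤
          C' * min (u ^ (-(γ * δ)) * R ^ ((d : ℝ) * (1 - δ))) 1 := by
  have : Nontrivial (EuclideanSpace ℝ (Fin d)) :=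
    Module.nontrivial_of_finrank_pos (R := ℝ) (finrank_euclideanSpace_fin.trans_gt hd)
  have hdim : Module.finrank ℝ (EuclideanSpace ℝ (Fin d)) = d := finrank_euclideanSpace_fin
  have hγδ : γ * δ < 1 := by rwa [lt_div_iff₀ hγ0, mul_comm] at hδ2
  set ρ' : ℝ → ℝ := fun y => ρ (max y 0)
  have hρ' : Antitone ρ' := hρ_mono.antitone_comp_max_zero
  have h01 (y : ℝ) : 0 ≤ ρ' y ∧ ρ' y ≤ 1 := hρ_range _ (le_max_right y 0)
  have hbound (y : ℝ) (hy : 1 ≤ y) : c * y ^ (-δ) ≤ ρ' y ∧ ρ' y ≤ C * y ^ (-δ) := by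
    simpa only [ρ', max_eq_left (zero_le_one.trans hy)] using hρ_bound y hy
  set μ : Measure (EuclideanSpace ℝ (Fin d)) := volume
  set κ := normTailConst μ (d * δ)
  have hκ : 0 < κ := by
    simpa only [κ, hdim] using normTailConst_pos μ (finrank_lt_finrank_mul _ hδ1)
  refine ⟨min (c * κ) 1, max (max C 1 / (1 - γ * δ) * κ) 1, lt_min (by positivity) one_pos,
    (min_le_right _ _).trans (le_max_right _ _), fun u R ⟨hu0, hu1⟩ hR => ?_⟩
  have hR0 : 0 < R := by linarith
  have hI : (∫ x in {x : EuclideanSpace ℝ (Fin d) | R ≤ ‖x‖},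
      ∫ v in Ioc (0 : ℝ) 1, ρ (‖x‖ ^ d * (u * v) ^ γ)) =
        ∫ x in {x : EuclideanSpace ℝ (Fin d) | R ≤ ‖x‖}, averagedProfile ρ' γ u (‖x‖ ^ d) :=
    integral_congr_ae <| .of_forall fun x =>
      (averagedProfile_comp_max_zero hu0.le (by positivity)).symm
  have hlow := mul_min_le_setIntegral_averagedProfile μ hρ' (fun y => (h01 y).1)
    (fun y => (h01 y).2) (fun y hy => (hbound y hy).2)
    (fun y hy => (hbound y hy).1) hc.le hγ0.le hδ1 hγδ hu0 hu1 hR0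
  have hup := setIntegral_averagedProfile_le μ hρ' (fun y => (h01 y).1)
    (fun y => (h01 y).2) (fun y hy => (hbound y hy).2) hδ1 hγδ hu0 hR0
  simp only [hdim] at hlow hup
  rw [hI]
  exact ⟨min_mul_min_le_min (by positivity) hlow, min_le_max_mul_min (by positivity) hup⟩

/-- One-edge escape probability asymptotics for a soft profile in the regime `1 < δ < 1/γ`:
the expected number of direct connections of a vertex with mark `u` at the origin to
vertices outside `B(0,R)`, truncated at 1, is of order `min(u^{-γδ} R^{d(1-δ)}, 1)`. -/
theorem stmt_2 (d : ℕ) (hd : 1 ≤ d) (γ δ : ℝ) (hγ0 : 0 < γ) (hγ1 : γ < 1)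
    (hδ1 : 1 < δ) (hδ2 : δ < 1 / γ)
    (ρ : ℝ → ℝ) (c C : ℝ) (hc : 0 < c) (hcC : c ≤ C)
    (hρ_range : ∀ x : ℝ, 0 ≤ x → 0 ≤ ρ x ∧ ρ x ≤ 1)
    (hρ_mono : AntitoneOn ρ (Ici (0 : ℝ)))
    (hρ_bound : ∀ x : ℝ, 1 ≤ x → c * x ^ (-δ) ≤ ρ x ∧ ρ x ≤ C * x ^ (-δ)) :
    ∃ c' C' : ℝ, 0 < c' ∧ c' ≤ C' ∧ ∀ u R : ℝ, u ∈ Ioc (0 : ℝ) 1 → 2 ≤ R →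
      c' * min (u ^ (-(γ * δ)) * R ^ ((d : ℝ) * (1 - δ))) 1 ≤
          min (∫ x in {x : EuclideanSpace ℝ (Fin d) | R ≤ ‖x‖},
              ∫ v in Ioc (0 : ℝ) 1, ρ (‖x‖ ^ d * (u * v) ^ γ)) 1 ∧
      min (∫ x in {x : EuclideanSpace ℝ (Fin d) | R ≤ ‖x‖},
              ∫ v in Ioc (0 : ℝ) 1, ρ (‖x‖ ^ d * (u * v) ^ γ)) 1 ≤
          C' * min (u ^ (-(γ * δ)) * R ^ ((d : ℝ) * (1 - δ))) 1 :=
  stmt_2_general d hd γ δ hγ0 hδ1 hδ2 ρ c C hc hρ_range hρ_mono hρ_bound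
end

section
/- Let d ≥ 1 be an integer, let 0 < γ < 1 and let r₀ > 0. Then there exist R₀ ≥ 2 and constants 0 < c' ≤ C' < ∞ (depending only on d, γ and r₀) such that for every u ∈ (0,1] and every R ≥ R₀ one has c'·min(u^{−1} R^{d(1−1/γ)}, 1) ≤ min( ∫_{{x ∈ ℝ^d : |x| ≥ R}} ∫_0^1 𝟙{ |x|^d (u v)^γ ≤ r₀ } dv dx , 1 ) ≤ C'·min(u^{−1} R^{d(1−1/γ)}, 1). -/
/-!
For `‖x‖ = n` the mark integral is explicit: the indicator holds iff
`v ≤ u⁻¹ (r₀ / n^d)^(1/γ)`, so it equals `min (a n^(-p)) 1` with `a = u⁻¹ r₀^(1/γ)` and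
`p = d/γ > d`. Polar coordinates turn the outer integral into
`d |B(0,1)| ∫_R^∞ y^(d-1) min (a y^(-p)) 1 dy`. Dropping the `min` bounds this tail by
`a R^(d-p) / (p-d)`, a multiple of `M = u⁻¹ R^(d(1-1/γ))`; restricting to `y ∈ (R, 2R]` bounds it
below by `R^d min (a (2R)^(-p)) 1 ≥ min (2^(-p) r₀^(1/γ) M) 1`, using `R ≥ 1`. Truncating both
bounds at `1` gives the claim.
-/

open MeasureTheory Real Set

section MinOne

variable {b A M I : ℝ}

theorem min_mul_min_one_le (hb : 0 ≤ b) (hM : 0 ≤ M) : min b 1 * min M 1 ≤ min (b * M) 1 :=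
  le_min (mul_le_mul (min_le_left _ _) (min_le_left _ _) (le_min hM zero_le_one) hb)
    (mul_le_one₀ (min_le_right _ _) (le_min hM zero_le_one) (min_le_right _ _))

theorem min_mul_min_one_le_min_one_of_mul_le (hM : 0 ≤ M) (h : b * min M 1 ≤ I) :
    min b 1 * min M 1 ≤ min I 1 :=
  le_min ((mul_le_mul_of_nonneg_right (min_le_left _ _) (le_min hM zero_le_one)).trans h)
    (mul_le_one₀ (min_le_right _ _) (le_min hM zero_le_one) (min_le_right _ _))

theorem min_one_le_max_mul_min_one_of_le_mul (hM : 0 ≤ M) (h : I ≤ A * M) :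
    min I 1 ≤ max A 1 * min M 1 := by
  rcases le_total M 1 with hM1 | hM1
  · rw [min_eq_left hM1]
    exact (min_le_left _ _).trans (h.trans (mul_le_mul_of_nonneg_right (le_max_left _ _) hM))
  · rw [min_eq_right hM1, mul_one]
    exact (min_le_right _ _).trans (le_max_right _ _)

end MinOne

theorem lt_div_self_of_lt_one {a b : ℝ} (ha : 0 < a) (hb0 : 0 < b) (hb1 : b < 1) : a < a / b :=
  (lt_div_iff₀ hb0).2 (mul_lt_of_lt_one_right ha hb1)

theorem integral_Ioc_zero_one_ite_le {t : ℝ} (ht : 0 ≤ t) :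
    ∫ v in Ioc (0 : ℝ) 1, (if v ≤ t then (1 : ℝ) else 0) = min t 1 := by
  have : (fun v : ℝ => if v ≤ t then (1 : ℝ) else 0) = (Iic t).indicator fun _ => 1 := by
    ext v; simp [indicator_apply]
  rw [this, setIntegral_indicator measurableSet_Iic, Ioc_inter_Iic, setIntegral_const,
    volume_real_Ioc_of_le (le_min zero_le_one ht), smul_eq_mul, mul_one, sub_zero, min_comm]

theorem mul_rpow_le_iff {c w γ r : ℝ} (hc : 0 < c) (hw : 0 ≤ w) (hγ : 0 < γ) (hr : 0 ≤ r) :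
    c * w ^ γ ≤ r ↔ w ≤ (r / c) ^ γ⁻¹ := by
  rw [le_rpow_inv_iff_of_pos hw (div_nonneg hr hc.le) hγ, le_div_iff₀' hc]

theorem integral_Ioc_zero_one_ite_mul_rpow_le {c u γ r : ℝ} (hc : 0 < c) (hu : 0 < u)
    (hγ : 0 < γ) (hr : 0 ≤ r) :
    ∫ v in Ioc (0 : ℝ) 1, (if c * (u * v) ^ γ ≤ r then (1 : ℝ) else 0) =
      min (u⁻¹ * (r / c) ^ γ⁻¹) 1 := by
  rw [← integral_Ioc_zero_one_ite_le (by positivity)]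
  refine setIntegral_congr_fun measurableSet_Ioc fun v hv => ?_
  simp only [mul_rpow_le_iff hc (mul_pos hu hv.1).le hγ hr, le_inv_mul_iff₀ hu]

theorem div_pow_rpow_inv {r n γ : ℝ} (d : ℕ) (hr : 0 ≤ r) (hn : 0 < n) :
    (r / n ^ d) ^ γ⁻¹ = r ^ γ⁻¹ * n ^ (-(d / γ)) := by
  rw [div_rpow hr (by positivity), ← rpow_natCast, ← rpow_mul hn.le, rpow_neg hn.le,
    div_eq_mul_inv, div_eq_mul_inv]

theorem setIntegral_le_norm_fun_norm_addHaar {E : Type*} [NormedAddCommGroup E] [NormedSpace ℝ E]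
    [Nontrivial E] [FiniteDimensional ℝ E] [MeasurableSpace E] [BorelSpace E] (μ : Measure E)
    [μ.IsAddHaarMeasure] (f : ℝ → ℝ) {R : ℝ} (hR : 0 < R) :
    ∫ x in {x : E | R ≤ ‖x‖}, f ‖x‖ ∂μ = Module.finrank ℝ E * μ.real (Metric.ball 0 1) *
      ∫ y in Ioi R, y ^ (Module.finrank ℝ E - 1) * f y := by
  have hS : MeasurableSet {x : E | R ≤ ‖x‖} := measurableSet_le measurable_const measurable_norm
  have hf : {x : E | R ≤ ‖x‖}.indicator (fun x => f ‖x‖) = fun x => (Ici R).indicator f ‖x‖ := by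
    ext x; simp [indicator_apply]
  have hg : (fun y : ℝ => y ^ (Module.finrank ℝ E - 1) • (Ici R).indicator f y) =
      (Ici R).indicator fun y => y ^ (Module.finrank ℝ E - 1) * f y := by
    ext y; simp [indicator_apply]
  rw [← integral_indicator hS, hf, integral_fun_norm_addHaar, nsmul_eq_mul, smul_eq_mul, hg,
    setIntegral_indicator measurableSet_Ici,
    inter_eq_right.2 (Ici_subset_Ioi.2 hR), integral_Ici_eq_integral_Ioi, mul_assoc]

noncomputable def escapeIntegral (d : ℕ) (γ r₀ u R : ℝ) : ℝ :=
  ∫ x in {x : EuclideanSpace ℝ (Fin d) | R ≤ ‖x‖},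
    ∫ v in Ioc (0 : ℝ) 1, (if ‖x‖ ^ d * (u * v) ^ γ ≤ r₀ then (1 : ℝ) else 0)

theorem escapeIntegral_eq {d : ℕ} {γ r₀ u R : ℝ} (hd : 1 ≤ d) (hγ : 0 < γ) (hr₀ : 0 ≤ r₀)
    (hu : 0 < u) (hR : 0 < R) :
    escapeIntegral d γ r₀ u R = d * volume.real (Metric.ball (0 : EuclideanSpace ℝ (Fin d)) 1) *
      ∫ y in Ioi R, y ^ (d - 1) * min (u⁻¹ * r₀ ^ γ⁻¹ * y ^ (-(d / γ))) 1 := by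
  have : Nontrivial (EuclideanSpace ℝ (Fin d)) :=
    Module.nontrivial_of_finrank_pos (R := ℝ) (by rwa [finrank_euclideanSpace_fin])
  have hS : MeasurableSet {x : EuclideanSpace ℝ (Fin d) | R ≤ ‖x‖} :=
    measurableSet_le measurable_const measurable_norm
  rw [escapeIntegral, setIntegral_congr_fun hS fun x (hx : R ≤ ‖x‖) =>
      integral_Ioc_zero_one_ite_mul_rpow_le (pow_pos (hR.trans_le hx) d) hu hγ hr₀,
    setIntegral_le_norm_fun_norm_addHaar _ (fun n => min (u⁻¹ * (r₀ / n ^ d) ^ γ⁻¹) 1) hR,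
    finrank_euclideanSpace_fin]
  congr 1
  refine setIntegral_congr_fun measurableSet_Ioi fun y (hy : R < y) => ?_
  rw [div_pow_rpow_inv d hr₀ (hR.trans hy), mul_assoc]

section RadialTail

variable {d : ℕ} {a p R : ℝ}

theorem pow_mul_min_rpow_le (hd : 1 ≤ d) {y : ℝ} (hy : 0 < y) :
    y ^ (d - 1) * min (a * y ^ (-p)) 1 ≤ a * y ^ ((d : ℝ) - 1 - p) :=
  calc _ ≤ y ^ (d - 1) * (a * y ^ (-p)) :=
        mul_le_mul_of_nonneg_left (min_le_left _ _) (by positivity)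
    _ = _ := by
      rw [← rpow_natCast, Nat.cast_sub hd, Nat.cast_one, sub_eq_add_neg _ p, rpow_add hy]
      ring

theorem integrableOn_Ioi_pow_mul_min_rpow (hd : 1 ≤ d) (ha : 0 ≤ a) (hp : d < p) (hR : 0 < R) :
    IntegrableOn (fun y : ℝ => y ^ (d - 1) * min (a * y ^ (-p)) 1) (Ioi R) := by
  have hmaj := (integrableOn_Ioi_rpow_of_lt (a := (d : ℝ) - 1 - p) (by linarith) hR).const_mul a
  refine hmaj.mono' (Measurable.aestronglyMeasurable (by fun_prop)) ?_
  filter_upwards [ae_restrict_mem measurableSet_Ioi] with y (hy : R < y)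
  have hy0 := hR.trans hy
  rw [norm_of_nonneg (by positivity)]
  exact pow_mul_min_rpow_le hd hy0

theorem setIntegral_Ioi_pow_mul_min_rpow_le (hd : 1 ≤ d) (ha : 0 ≤ a) (hp : d < p) (hR : 0 < R) :
    ∫ y in Ioi R, y ^ (d - 1) * min (a * y ^ (-p)) 1 ≤ a * R ^ ((d : ℝ) - p) / (p - d) := by
  have hs : (d : ℝ) - 1 - p < -1 := by linarith
  calc _ ≤ ∫ y in Ioi R, a * y ^ ((d : ℝ) - 1 - p) :=
        setIntegral_mono_on (integrableOn_Ioi_pow_mul_min_rpow hd ha hp hR)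
          ((integrableOn_Ioi_rpow_of_lt hs hR).const_mul a) measurableSet_Ioi
          fun y hy => pow_mul_min_rpow_le hd (hR.trans hy)
    _ = _ := by
      rw [integral_const_mul, integral_Ioi_rpow_of_lt hs hR,
        show (d : ℝ) - 1 - p + 1 = d - p by ring, neg_div, ← div_neg, neg_sub, mul_div_assoc]

theorem le_setIntegral_Ioi_pow_mul_min_rpow (hd : 1 ≤ d) (ha : 0 ≤ a) (hp : d < p) (hR : 0 < R) :
    R ^ d * min (a * (2 * R) ^ (-p)) 1 ≤ ∫ y in Ioi R, y ^ (d - 1) * min (a * y ^ (-p)) 1 := by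
  have hint := integrableOn_Ioi_pow_mul_min_rpow hd ha hp hR
  have hp0 : 0 ≤ p := by linarith [(Nat.cast_nonneg d : (0 : ℝ) ≤ d)]
  have hbound : ∀ y ∈ Ioc R (2 * R),
      R ^ (d - 1) * min (a * (2 * R) ^ (-p)) 1 ≤ y ^ (d - 1) * min (a * y ^ (-p)) 1 := by
    rintro y ⟨hRy, hy2R⟩
    have hy := hR.trans hRy
    gcongr ?_ ^ _ * min (a * ?_) 1
    exact rpow_le_rpow_of_nonpos hy hy2R (neg_nonpos.2 hp0)
  calc R ^ d * min (a * (2 * R) ^ (-p)) 1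
      = R ^ (d - 1) * min (a * (2 * R) ^ (-p)) 1 * volume.real (Ioc R (2 * R)) := by
        rw [volume_real_Ioc_of_le (by linarith), ← pow_sub_one_mul (by omega : d ≠ 0)]
        ring
    _ ≤ ∫ y in Ioc R (2 * R), y ^ (d - 1) * min (a * y ^ (-p)) 1 :=
        setIntegral_ge_of_const_le_real measurableSet_Ioc measure_Ioc_lt_top.ne hbound
          (hint.mono_set Ioc_subset_Ioi_self)
    _ ≤ _ := by
      refine setIntegral_mono_set hint ?_ Ioc_subset_Ioi_self.eventuallyLE
      filter_upwards [ae_restrict_mem measurableSet_Ioi] with y (hy : R < y)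
      have hy0 := hR.trans hy
      positivity

end RadialTail

section EscapeBounds

variable {d : ℕ} {γ r₀ u R : ℝ}

theorem escapeIntegral_le (hd : 1 ≤ d) (hγ0 : 0 < γ) (hγ1 : γ < 1) (hr₀ : 0 ≤ r₀) (hu : 0 < u)
    (hR : 0 < R) :
    escapeIntegral d γ r₀ u R ≤
      d * volume.real (Metric.ball (0 : EuclideanSpace ℝ (Fin d)) 1) * r₀ ^ γ⁻¹ / (d / γ - d) *
        (u⁻¹ * R ^ ((d : ℝ) - d / γ)) := by
  rw [escapeIntegral_eq hd hγ0 hr₀ hu hR]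
  calc _ ≤ d * volume.real (Metric.ball (0 : EuclideanSpace ℝ (Fin d)) 1) *
        (u⁻¹ * r₀ ^ γ⁻¹ * R ^ ((d : ℝ) - d / γ) / (d / γ - d)) := by
        gcongr
        exact setIntegral_Ioi_pow_mul_min_rpow_le hd (by positivity)
          (lt_div_self_of_lt_one (by exact_mod_cast hd) hγ0 hγ1) hR
    _ = _ := by ring

theorem le_escapeIntegral (hd : 1 ≤ d) (hγ0 : 0 < γ) (hγ1 : γ < 1) (hr₀ : 0 ≤ r₀) (hu : 0 < u)
    (hR : 1 ≤ R) :
    d * volume.real (Metric.ball (0 : EuclideanSpace ℝ (Fin d)) 1) *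
        min (r₀ ^ γ⁻¹ * 2 ^ (-(d / γ))) 1 * min (u⁻¹ * R ^ ((d : ℝ) - d / γ)) 1 ≤
      escapeIntegral d γ r₀ u R := by
  have hR0 : 0 < R := by linarith
  rw [escapeIntegral_eq hd hγ0 hr₀ hu hR0, mul_assoc]
  gcongr
  have hx : r₀ ^ γ⁻¹ * 2 ^ (-(d / γ)) * (u⁻¹ * R ^ ((d : ℝ) - d / γ)) =
      R ^ d * (u⁻¹ * r₀ ^ γ⁻¹ * (2 * R) ^ (-(d / γ))) := by
    rw [mul_rpow zero_le_two hR0.le, sub_eq_add_neg, rpow_add hR0, rpow_natCast]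
    ring
  set x := u⁻¹ * r₀ ^ γ⁻¹ * (2 * R) ^ (-(d / γ))
  calc _ ≤ min (r₀ ^ γ⁻¹ * 2 ^ (-(d / γ)) * (u⁻¹ * R ^ ((d : ℝ) - d / γ))) 1 :=
        min_mul_min_one_le (by positivity) (by positivity)
    _ = min (R ^ d * x) 1 := by rw [hx]
    _ ≤ min (R ^ d * x) (R ^ d) := min_le_min_left _ (one_le_pow₀ hR)
    _ = R ^ d * min x 1 := by rw [mul_min_of_nonneg _ _ (by positivity), mul_one]
    _ ≤ _ := le_setIntegral_Ioi_pow_mul_min_rpow hd (by positivity)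
          (lt_div_self_of_lt_one (by exact_mod_cast hd) hγ0 hγ1) hR0

end EscapeBounds

/-- One-edge escape probability asymptotics for the hard profile `ρ = 1_{[0,r₀]}`
(formally `δ = ∞`): for `R` large, the expected number of direct connections of a vertex
with mark `u` at the origin to vertices outside `B(0,R)`, truncated at 1, is of order
`min(u⁻¹ R^{d(1-1/γ)}, 1)`. -/
theorem stmt_4 (d : ℕ) (hd : 1 ≤ d) (γ : ℝ) (hγ0 : 0 < γ) (hγ1 : γ < 1)
    (r₀ : ℝ) (hr₀ : 0 < r₀) :
    ∃ R₀ : ℝ, 2 ≤ R₀ ∧ ∃ c' C' : ℝ, 0 < c' ∧ c' ≤ C' ∧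
      ∀ u R : ℝ, u ∈ Ioc (0 : ℝ) 1 → R₀ ≤ R →
      c' * min (u⁻¹ * R ^ ((d : ℝ) * (1 - 1 / γ))) 1 ≤
          min (∫ x in {x : EuclideanSpace ℝ (Fin d) | R ≤ ‖x‖},
              ∫ v in Ioc (0 : ℝ) 1,
                (if ‖x‖ ^ d * (u * v) ^ γ ≤ r₀ then (1 : ℝ) else 0)) 1 ∧
      min (∫ x in {x : EuclideanSpace ℝ (Fin d) | R ≤ ‖x‖},
              ∫ v in Ioc (0 : ℝ) 1,
                (if ‖x‖ ^ d * (u * v) ^ γ ≤ r₀ then (1 : ℝ) else 0)) 1 ≤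
          C' * min (u⁻¹ * R ^ ((d : ℝ) * (1 - 1 / γ))) 1 := by
  set κ := volume.real (Metric.ball (0 : EuclideanSpace ℝ (Fin d)) 1)
  have hκ : 0 < κ :=
    ENNReal.toReal_pos (Metric.measure_ball_pos _ _ one_pos).ne' measure_ball_lt_top.ne
  have hd0 : (0 : ℝ) < d := by exact_mod_cast hd
  refine ⟨2, le_rfl, min (d * κ * min (r₀ ^ γ⁻¹ * 2 ^ (-(d / γ))) 1) 1,
    max (d * κ * r₀ ^ γ⁻¹ / (d / γ - d)) 1, lt_min (by positivity) one_pos,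
    (min_le_right _ 1).trans (le_max_right _ 1), fun u R hu hR => ?_⟩
  have hM : 0 ≤ u⁻¹ * R ^ ((d : ℝ) - d / γ) :=
    mul_nonneg (inv_nonneg.2 hu.1.le) (rpow_nonneg (by linarith) _)
  rw [show (d : ℝ) * (1 - 1 / γ) = d - d / γ by ring]
  exact ⟨min_mul_min_one_le_min_one_of_mul_le hM
      (le_escapeIntegral hd hγ0 hγ1 hr₀.le hu.1 (by linarith)),
    min_one_le_max_mul_min_one_of_le_mul hM
      (escapeIntegral_le hd hγ0 hγ1 hr₀.le hu.1 (by linarith))⟩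
end

section
/- Let d ≥ 1 be an integer, let 0 < γ < 1, let 1 < δ < 1/γ, and let ρ be a soft profile with decay exponent δ. Then there exist constants 0 < c' ≤ C' < ∞ (depending only on d, γ, δ and the constants in the definition of ρ) such that for every u ∈ (0,1], every r ≥ 1 and every x ∈ ℝ^d with |x| = R ≥ 2r, one has c'·r^d·min(u^{−γδ} R^{−dδ}, 1) ≤ ∫_{B(0,r)} ∫_0^1 ρ(|x−y|^d (u v)^γ) dv dy ≤ C'·r^d·min(u^{−γδ} R^{−dδ}, 1). -/
/-!
Integrate out the mark first. With `b = ‖x - y‖^d u^γ`, the inner integral `∫₀¹ ρ(b v^γ) dv`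
is of order `min(b^{-δ}, 1)`: from below since `ρ` is non-increasing and `b v^γ ≤ b`, from above
since `ρ(z) ≤ max(C, 1) z^{-δ}` and `v^{-γδ}` is integrable on `(0, 1]`, which is where `γδ < 1`
enters. For `y ∈ B(0, r)` and `‖x‖ = R ≥ 2r` we have `R/2 ≤ ‖x - y‖ ≤ 3R/2`, so this order is
comparable to `min(u^{-γδ} R^{-dδ}, 1)` uniformly in `y`, and the ball contributes
`vol B(0, r) = r^d vol B(0, 1)`.
-/

open MeasureTheory Real Set

lemma AntitoneOn.measurable_comp_of_nonneg {α : Type*} [MeasurableSpace α] {f : ℝ → ℝ}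
    (hf : AntitoneOn f (Ici 0)) {g : α → ℝ} (hg : Measurable g) (hg0 : ∀ a, 0 ≤ g a) :
    Measurable fun a => f (g a) := by
  have hext : Antitone fun t => f (max t 0) := fun a b hab =>
    hf (le_max_right a 0) (le_max_right b 0) (max_le_max hab le_rfl)
  simpa only [Function.comp_def, max_eq_left (hg0 _)] using hext.measurable.comp hg

lemma min_rpow_neg_le_mul {δ a b t : ℝ} (hδ : 0 ≤ δ) (ht : 1 ≤ t) (ha : 0 ≤ a) (hb : 0 < b)
    (hba : b ≤ t * a) : min (a ^ (-δ)) 1 ≤ t ^ δ * min (b ^ (-δ)) 1 := by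
  have ht0 : 0 < t := zero_lt_one.trans_le ht
  have hab : a ^ (-δ) ≤ t ^ δ * b ^ (-δ) :=
    calc a ^ (-δ) = t ^ δ * (t * a) ^ (-δ) := by
          rw [mul_rpow ht0.le ha, rpow_neg ht0.le, ← mul_assoc,
            mul_inv_cancel₀ (rpow_pos_of_pos ht0 δ).ne', one_mul]
      _ ≤ t ^ δ * b ^ (-δ) := by
          gcongr ?_ * ?_
          exact rpow_le_rpow_of_nonpos hb hba (neg_nonpos.2 hδ)
  rw [mul_min_of_nonneg _ _ (rpow_nonneg ht0.le δ), mul_one]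
  exact le_min ((min_le_left _ _).trans hab) ((min_le_right _ _).trans (one_le_rpow ht hδ))

lemma rpow_neg_mul_rpow_neg_eq (d : ℕ) {γ δ u w : ℝ} (hu : 0 ≤ u) (hw : 0 ≤ w) :
    u ^ (-(γ * δ)) * w ^ (-((d : ℝ) * δ)) = (w ^ d * u ^ γ) ^ (-δ) := by
  rw [mul_rpow (pow_nonneg hw d) (rpow_nonneg hu γ), ← rpow_natCast, ← rpow_mul hw,
    ← rpow_mul hu, mul_neg, mul_neg, mul_comm]

section Profile

variable {ρ : ℝ → ℝ} {γ δ c C : ℝ}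

lemma mul_min_rpow_neg_le_of_antitoneOn (hδ : 0 ≤ δ) (hρ : AntitoneOn ρ (Ici 0))
    (hlow : ∀ x, 1 ≤ x → c * x ^ (-δ) ≤ ρ x) {x : ℝ} (hx : 0 < x) :
    c * min (x ^ (-δ)) 1 ≤ ρ x := by
  rcases le_total x 1 with hx1 | hx1
  · rw [min_eq_right (one_le_rpow_of_pos_of_le_one_of_nonpos hx hx1 (neg_nonpos.2 hδ))]
    calc c * 1 = c * 1 ^ (-δ) := by rw [one_rpow]
      _ ≤ ρ 1 := hlow 1 le_rfl
      _ ≤ ρ x := hρ (mem_Ici.2 hx.le) (mem_Ici.2 zero_le_one) hx1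
  · rw [min_eq_left (rpow_le_one_of_one_le_of_nonpos hx1 (neg_nonpos.2 hδ))]
    exact hlow x hx1

lemma le_max_mul_rpow_neg (hδ : 0 ≤ δ) (hle : ∀ x, 0 ≤ x → ρ x ≤ 1)
    (hup : ∀ x, 1 ≤ x → ρ x ≤ C * x ^ (-δ)) {x : ℝ} (hx : 0 < x) :
    ρ x ≤ max C 1 * x ^ (-δ) := by
  rcases le_total 1 x with hx1 | hx1
  · exact (hup x hx1).trans (by gcongr; exact le_max_left C 1)
  · calc ρ x ≤ 1 := hle x hx.le
      _ ≤ 1 * x ^ (-δ) := by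
          rw [one_mul]; exact one_le_rpow_of_pos_of_le_one_of_nonpos hx hx1 (neg_nonpos.2 hδ)
      _ ≤ max C 1 * x ^ (-δ) := by gcongr; exact le_max_right C 1

end Profile

/-- The profile averaged over the uniform mark `v` of the endpoint in the ball: the double integral
of the theorem is `∫_{B(0,r)} markIntegral ρ γ (‖x - y‖ ^ d * u ^ γ) dy`. -/
noncomputable def markIntegral (ρ : ℝ → ℝ) (γ b : ℝ) : ℝ :=
  ∫ v in Ioc (0 : ℝ) 1, ρ (b * v ^ γ)

section MarkIntegral

variable {ρ : ℝ → ℝ} {γ δ c C : ℝ}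

lemma integrableOn_comp_mul_rpow (hρ : AntitoneOn ρ (Ici 0)) (hγ : 0 ≤ γ) {b : ℝ}
    (hb : 0 ≤ b) : IntegrableOn (fun v => ρ (b * v ^ γ)) (Ioc 0 1) := by
  have hanti : AntitoneOn (fun v => ρ (b * v ^ γ)) (Icc 0 1) := fun v hv w hw hvw =>
    hρ (mem_Ici.2 (mul_nonneg hb (rpow_nonneg hv.1 γ)))
      (mem_Ici.2 (mul_nonneg hb (rpow_nonneg hw.1 γ))) (by gcongr; exact hv.1)
  exact (hanti.integrableOn_isCompact isCompact_Icc).mono_set Ioc_subset_Icc_self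

lemma markIntegral_mul_rpow (ρ : ℝ → ℝ) (γ : ℝ) {a u : ℝ} (hu : 0 ≤ u) :
    markIntegral ρ γ (a * u ^ γ) = ∫ v in Ioc (0 : ℝ) 1, ρ (a * (u * v) ^ γ) :=
  setIntegral_congr_fun measurableSet_Ioc fun v hv => by
    rw [mul_rpow hu hv.1.le, mul_assoc]

lemma antitoneOn_markIntegral (hρ : AntitoneOn ρ (Ici 0)) (hγ : 0 ≤ γ) :
    AntitoneOn (markIntegral ρ γ) (Ici 0) := fun _ ha _ hb hab =>
  setIntegral_mono_on (integrableOn_comp_mul_rpow hρ hγ hb)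
    (integrableOn_comp_mul_rpow hρ hγ ha) measurableSet_Ioc fun _ hv =>
      hρ (mem_Ici.2 (mul_nonneg ha (rpow_nonneg hv.1.le γ)))
        (mem_Ici.2 (mul_nonneg hb (rpow_nonneg hv.1.le γ)))
        (mul_le_mul_of_nonneg_right hab (rpow_nonneg hv.1.le γ))

lemma markIntegral_le_one (hρ : AntitoneOn ρ (Ici 0)) (hle : ∀ x, 0 ≤ x → ρ x ≤ 1)
    (hγ : 0 ≤ γ) {b : ℝ} (hb : 0 ≤ b) : markIntegral ρ γ b ≤ 1 := by
  calc markIntegral ρ γ b ≤ ∫ _ in Ioc (0 : ℝ) 1, (1 : ℝ) :=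
        setIntegral_mono_on (integrableOn_comp_mul_rpow hρ hγ hb)
          (integrableOn_const measure_Ioc_lt_top.ne) measurableSet_Ioc
          fun _ hv => hle _ (mul_nonneg hb (rpow_nonneg hv.1.le γ))
    _ = 1 := by simp

lemma mul_min_rpow_neg_le_markIntegral (hδ : 0 ≤ δ) (hρ : AntitoneOn ρ (Ici 0))
    (hlow : ∀ x, 1 ≤ x → c * x ^ (-δ) ≤ ρ x) (hγ : 0 ≤ γ) {b : ℝ} (hb : 0 < b) :
    c * min (b ^ (-δ)) 1 ≤ markIntegral ρ γ b := by
  have h := setIntegral_ge_of_const_le_real measurableSet_Ioc measure_Ioc_lt_top.ne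
    (fun v hv => (mul_min_rpow_neg_le_of_antitoneOn hδ hρ hlow hb).trans
      (hρ (mem_Ici.2 (mul_nonneg hb.le (rpow_nonneg hv.1.le γ))) (mem_Ici.2 hb.le)
        (mul_le_of_le_one_right hb.le (rpow_le_one hv.1.le hv.2 hγ))))
    (integrableOn_comp_mul_rpow hρ hγ hb.le)
  simpa [markIntegral] using h

lemma markIntegral_le_rpow_neg (hγ : 0 ≤ γ) (hδ : 0 ≤ δ) (hγδ : γ * δ < 1)
    (hρ : AntitoneOn ρ (Ici 0)) (hle : ∀ x, 0 ≤ x → ρ x ≤ 1)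
    (hup : ∀ x, 1 ≤ x → ρ x ≤ C * x ^ (-δ)) {b : ℝ} (hb : 0 < b) :
    markIntegral ρ γ b ≤ max C 1 / (1 - γ * δ) * b ^ (-δ) := by
  have hint : IntegrableOn (fun v : ℝ => v ^ (-(γ * δ))) (Ioc 0 1) :=
    (intervalIntegrable_iff_integrableOn_Ioc_of_le zero_le_one).1
      (intervalIntegral.intervalIntegrable_rpow' (by linarith))
  have hval : ∫ v in Ioc (0 : ℝ) 1, v ^ (-(γ * δ)) = 1 / (1 - γ * δ) := by
    rw [← intervalIntegral.integral_of_le zero_le_one, integral_rpow (Or.inl (by linarith)),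
      one_rpow, zero_rpow (by linarith)]
    ring_nf
  calc markIntegral ρ γ b
      ≤ ∫ v in Ioc (0 : ℝ) 1, max C 1 * b ^ (-δ) * v ^ (-(γ * δ)) :=
        setIntegral_mono_on (integrableOn_comp_mul_rpow hρ hγ hb.le) (hint.const_mul _)
          measurableSet_Ioc fun v hv => by
            have hv0 : 0 < v ^ γ := rpow_pos_of_pos hv.1 γ
            calc ρ (b * v ^ γ) ≤ max C 1 * (b * v ^ γ) ^ (-δ) :=
                  le_max_mul_rpow_neg hδ hle hup (mul_pos hb hv0)
              _ = max C 1 * b ^ (-δ) * v ^ (-(γ * δ)) := by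
                  rw [mul_rpow hb.le hv0.le, ← rpow_mul hv.1.le, mul_neg, mul_assoc]
    _ = max C 1 / (1 - γ * δ) * b ^ (-δ) := by
        rw [integral_const_mul, hval]; ring

lemma markIntegral_le_mul_min (hγ : 0 ≤ γ) (hδ : 0 ≤ δ) (hγδ : γ * δ < 1)
    (hρ : AntitoneOn ρ (Ici 0)) (hle : ∀ x, 0 ≤ x → ρ x ≤ 1)
    (hup : ∀ x, 1 ≤ x → ρ x ≤ C * x ^ (-δ)) {b : ℝ} (hb : 0 < b) :
    markIntegral ρ γ b ≤ max C 1 / (1 - γ * δ) * min (b ^ (-δ)) 1 := by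
  have hK : 1 ≤ max C 1 / (1 - γ * δ) := by
    rw [one_le_div (by linarith)]
    nlinarith [le_max_right C 1, mul_nonneg hγ hδ]
  rw [mul_min_of_nonneg _ _ (zero_le_one.trans hK), mul_one]
  exact le_min (markIntegral_le_rpow_neg hγ hδ hγδ hρ hle hup hb)
    ((markIntegral_le_one hρ hle hγ hb.le).trans hK)

lemma markIntegral_pow_mul_rpow_mem_Icc (d : ℕ) (hγ : 0 ≤ γ) (hδ : 0 ≤ δ) (hγδ : γ * δ < 1)
    (hc : 0 ≤ c) (hρ : AntitoneOn ρ (Ici 0)) (hle : ∀ x, 0 ≤ x → ρ x ≤ 1)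
    (hbound : ∀ x, 1 ≤ x → c * x ^ (-δ) ≤ ρ x ∧ ρ x ≤ C * x ^ (-δ))
    {u R w : ℝ} (hu : 0 < u) (hR : 0 < R) (hw : w ∈ Icc (R / 2) (3 / 2 * R)) :
    markIntegral ρ γ (w ^ d * u ^ γ) ∈
      Icc (c / ((3 / 2) ^ d) ^ δ * min ((R ^ d * u ^ γ) ^ (-δ)) 1)
        (max C 1 / (1 - γ * δ) * (2 ^ d) ^ δ * min ((R ^ d * u ^ γ) ^ (-δ)) 1) := by
  have huγ : 0 < u ^ γ := rpow_pos_of_pos hu γ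
  have hw0 : 0 < w := by linarith [hw.1]
  have hB : 0 < R ^ d * u ^ γ := by positivity
  have hb : 0 < w ^ d * u ^ γ := by positivity
  have hcomp_lo :
      min ((R ^ d * u ^ γ) ^ (-δ)) 1 ≤ ((3 / 2) ^ d) ^ δ * min ((w ^ d * u ^ γ) ^ (-δ)) 1 :=
    min_rpow_neg_le_mul hδ (one_le_pow₀ (by norm_num)) hB.le hb <| by
      rw [← mul_assoc, ← mul_pow]; gcongr; linarith [hw.2]
  have hcomp_hi :
      min ((w ^ d * u ^ γ) ^ (-δ)) 1 ≤ (2 ^ d) ^ δ * min ((R ^ d * u ^ γ) ^ (-δ)) 1 :=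
    min_rpow_neg_le_mul hδ (one_le_pow₀ one_le_two) hb.le hB <| by
      rw [← mul_assoc, ← mul_pow]; gcongr; linarith [hw.1]
  constructor
  · calc c / ((3 / 2) ^ d) ^ δ * min ((R ^ d * u ^ γ) ^ (-δ)) 1
        ≤ c * min ((w ^ d * u ^ γ) ^ (-δ)) 1 := by
          rw [div_mul_eq_mul_div, div_le_iff₀ (by positivity)]
          linarith [mul_le_mul_of_nonneg_left hcomp_lo hc]
      _ ≤ _ := mul_min_rpow_neg_le_markIntegral hδ hρ (fun x hx => (hbound x hx).1) hγ hb
  · have hK : 0 ≤ max C 1 / (1 - γ * δ) := div_nonneg (by positivity) (by linarith)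
    calc markIntegral ρ γ (w ^ d * u ^ γ)
        ≤ max C 1 / (1 - γ * δ) * min ((w ^ d * u ^ γ) ^ (-δ)) 1 :=
          markIntegral_le_mul_min hγ hδ hγδ hρ hle (fun x hx => (hbound x hx).2) hb
      _ ≤ _ := by linarith [mul_le_mul_of_nonneg_left hcomp_hi hK]

end MarkIntegral

lemma norm_sub_mem_Icc_of_mem_ball {E : Type*} [SeminormedAddCommGroup E] {x y : E} {r : ℝ}
    (hy : y ∈ Metric.ball (0 : E) r) (hxr : 2 * r ≤ ‖x‖) :
    ‖x - y‖ ∈ Icc (‖x‖ / 2) (3 / 2 * ‖x‖) := by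
  rw [mem_ball_zero_iff] at hy
  constructor
  · linarith [norm_sub_norm_le x y]
  · linarith [norm_sub_le x y]

lemma setIntegral_ball_mem_Icc {E : Type*} [NormedAddCommGroup E] [NormedSpace ℝ E]
    [MeasurableSpace E] [BorelSpace E] [FiniteDimensional ℝ E] (μ : Measure E)
    [μ.IsAddHaarMeasure] {f : E → ℝ} {x : E} {r a b : ℝ} (hr : 0 < r)
    (hf : AEStronglyMeasurable f μ) (hfab : ∀ y ∈ Metric.ball x r, f y ∈ Icc a b) :
    ∫ y in Metric.ball x r, f y ∂μ ∈
      Icc (a * (r ^ Module.finrank ℝ E * μ.real (Metric.ball 0 1)))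
        (b * (r ^ Module.finrank ℝ E * μ.real (Metric.ball 0 1))) := by
  have hvol :
      μ.real (Metric.ball x r) = r ^ Module.finrank ℝ E * μ.real (Metric.ball 0 1) := by
    rw [measureReal_def, Measure.addHaar_ball_of_pos μ x hr, ENNReal.toReal_mul,
      ENNReal.toReal_ofReal (by positivity), measureReal_def]
  have hint : IntegrableOn f (Metric.ball x r) μ :=
    Measure.integrableOn_of_bounded measure_ball_lt_top.ne hf (M := max |a| |b|) <|
      (ae_restrict_iff' measurableSet_ball).2 <| ae_of_all _ fun y hy =>
        abs_le_max_abs_abs (hfab y hy).1 (hfab y hy).2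
  rw [← hvol]
  constructor
  · exact setIntegral_ge_of_const_le_real measurableSet_ball measure_ball_lt_top.ne
      (fun y hy => (hfab y hy).1) hint
  · calc ∫ y in Metric.ball x r, f y ∂μ ≤ ∫ _ in Metric.ball x r, b ∂μ :=
          setIntegral_mono_on hint (integrableOn_const measure_ball_lt_top.ne)
            measurableSet_ball fun y hy => (hfab y hy).2
      _ = b * μ.real (Metric.ball x r) := by rw [setIntegral_const, smul_eq_mul, mul_comm]

theorem stmt_5_general (d : ℕ) (γ δ : ℝ) (hγ0 : 0 < γ)
    (hδ1 : 1 < δ) (hδ2 : δ < 1 / γ)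
    (ρ : ℝ → ℝ) (c C : ℝ) (hc : 0 < c)
    (hρ_range : ∀ x : ℝ, 0 ≤ x → 0 ≤ ρ x ∧ ρ x ≤ 1)
    (hρ_mono : AntitoneOn ρ (Ici (0 : ℝ)))
    (hρ_bound : ∀ x : ℝ, 1 ≤ x → c * x ^ (-δ) ≤ ρ x ∧ ρ x ≤ C * x ^ (-δ)) :
    ∃ c' C' : ℝ, 0 < c' ∧ c' ≤ C' ∧
      ∀ u r R : ℝ, u ∈ Ioc (0 : ℝ) 1 → 1 ≤ r →
        ∀ x : EuclideanSpace ℝ (Fin d), ‖x‖ = R → 2 * r ≤ R →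
      c' * (r ^ d * min (u ^ (-(γ * δ)) * R ^ (-((d : ℝ) * δ))) 1) ≤
          (∫ y in Metric.ball (0 : EuclideanSpace ℝ (Fin d)) r,
              ∫ v in Ioc (0 : ℝ) 1, ρ (‖x - y‖ ^ d * (u * v) ^ γ)) ∧
      (∫ y in Metric.ball (0 : EuclideanSpace ℝ (Fin d)) r,
              ∫ v in Ioc (0 : ℝ) 1, ρ (‖x - y‖ ^ d * (u * v) ^ γ)) ≤
          C' * (r ^ d * min (u ^ (-(γ * δ)) * R ^ (-((d : ℝ) * δ))) 1) := by
  have hδ : 0 ≤ δ := by linarith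
  have hγδ : γ * δ < 1 := by rwa [lt_div_iff₀ hγ0, mul_comm] at hδ2
  set V := volume.real (Metric.ball (0 : EuclideanSpace ℝ (Fin d)) 1)
  have hV : 0 < V :=
    ENNReal.toReal_pos (Metric.measure_ball_pos volume 0 one_pos).ne' measure_ball_lt_top.ne
  set lo := c / ((3 / 2 : ℝ) ^ d) ^ δ
  set hi := max C 1 / (1 - γ * δ) * (2 ^ d : ℝ) ^ δ
  refine ⟨lo * V, max (lo * V) (hi * V), by positivity, le_max_left _ _, ?_⟩
  intro u r R hu hr x hx hR
  subst hx
  have hx0 : 0 < ‖x‖ := by linarith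
  set M := min ((‖x‖ ^ d * u ^ γ) ^ (-δ)) 1
  have hM : 0 ≤ r ^ d * M :=
    mul_nonneg (pow_nonneg (by linarith) d)
      (le_min (rpow_nonneg (mul_nonneg (by positivity) (rpow_nonneg hu.1.le γ)) _) zero_le_one)
  have hmeas : Measurable fun y : EuclideanSpace ℝ (Fin d) =>
      markIntegral ρ γ (‖x - y‖ ^ d * u ^ γ) :=
    (antitoneOn_markIntegral hρ_mono hγ0.le).measurable_comp_of_nonneg (by fun_prop)
      fun y => mul_nonneg (by positivity) (rpow_nonneg hu.1.le γ)
  have hbounds := setIntegral_ball_mem_Icc volume (by linarith) hmeas.aestronglyMeasurable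
    fun y hy => markIntegral_pow_mul_rpow_mem_Icc d hγ0.le hδ hγδ hc.le hρ_mono
      (fun x hx => (hρ_range x hx).2) hρ_bound hu.1 hx0 (norm_sub_mem_Icc_of_mem_ball hy hR)
  simp only [markIntegral_mul_rpow ρ γ hu.1.le, finrank_euclideanSpace_fin] at hbounds
  rw [rpow_neg_mul_rpow_neg_eq d hu.1.le hx0.le]
  constructor
  · linarith [hbounds.1]
  · calc _ ≤ hi * V * (r ^ d * M) := by linarith [hbounds.2]
      _ ≤ _ := mul_le_mul_of_nonneg_right (le_max_right _ _) hM

/-- One-edge connection probability from a fixed vertex `(x,u)` with `|x| = R ≥ 2r` to the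
ball `B(0,r)`, soft profile, regime `1 < δ < 1/γ`: the expected number of direct
connections is of order `r^d · min(u^{-γδ} R^{-dδ}, 1)`. -/
theorem stmt_5 (d : ℕ) (hd : 1 ≤ d) (γ δ : ℝ) (hγ0 : 0 < γ) (hγ1 : γ < 1)
    (hδ1 : 1 < δ) (hδ2 : δ < 1 / γ)
    (ρ : ℝ → ℝ) (c C : ℝ) (hc : 0 < c) (hcC : c ≤ C)
    (hρ_range : ∀ x : ℝ, 0 ≤ x → 0 ≤ ρ x ∧ ρ x ≤ 1)
    (hρ_mono : AntitoneOn ρ (Ici (0 : ℝ)))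
    (hρ_bound : ∀ x : ℝ, 1 ≤ x → c * x ^ (-δ) ≤ ρ x ∧ ρ x ≤ C * x ^ (-δ)) :
    ∃ c' C' : ℝ, 0 < c' ∧ c' ≤ C' ∧
      ∀ u r R : ℝ, u ∈ Ioc (0 : ℝ) 1 → 1 ≤ r →
        ∀ x : EuclideanSpace ℝ (Fin d), ‖x‖ = R → 2 * r ≤ R →
      c' * (r ^ d * min (u ^ (-(γ * δ)) * R ^ (-((d : ℝ) * δ))) 1) ≤
          (∫ y in Metric.ball (0 : EuclideanSpace ℝ (Fin d)) r,
              ∫ v in Ioc (0 : ℝ) 1, ρ (‖x - y‖ ^ d * (u * v) ^ γ)) ∧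
      (∫ y in Metric.ball (0 : EuclideanSpace ℝ (Fin d)) r,
              ∫ v in Ioc (0 : ℝ) 1, ρ (‖x - y‖ ^ d * (u * v) ^ γ)) ≤
          C' * (r ^ d * min (u ^ (-(γ * δ)) * R ^ (-((d : ℝ) * δ))) 1) :=
  stmt_5_general d γ δ hγ0 hδ1 hδ2 ρ c C hc hρ_range hρ_mono hρ_bound
end

section
/- Let d ≥ 1 be an integer, let 0 < γ < 1, let δ > 1/γ, and let ρ be a soft profile with decay exponent δ. Then there exist constants 0 < c' ≤ C' < ∞ (depending only on d, γ, δ and the constants in the definition of ρ) such that for every u ∈ (0,1], every r ≥ 1 and every x ∈ ℝ^d with |x| = R ≥ 2r, one has c'·r^d·min(u^{−1} R^{−d/γ}, 1) ≤ ∫_{B(0,r)} ∫_0^1 ρ(|x−y|^d (u v)^γ) dv dy ≤ C'·r^d·min(u^{−1} R^{−d/γ}, 1). -/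
/-!
Substituting `v = b t` with `b = u⁻¹ w ^ (-1/γ)` turns `∫₀¹ ρ(w (u v)^γ) dv` into
`b ∫₀^{1/b} ρ(t^γ) dt`. Since `ρ(t^γ) ≥ c` for `t ≤ 1` while `ρ(t^γ) ≤ C t^{-γδ}` is integrable
at infinity precisely because `γδ > 1`, this is comparable to `min b 1`. For `y ∈ B(0,r)` and
`|x| = R ≥ 2r` we have `R/2 ≤ |x - y| ≤ 2R`, so with `w = |x - y|^d` the inner integral is
comparable to `min (u⁻¹ R^{-d/γ}) 1` uniformly on the ball, up to factors `2^{d/γ}`; integrating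
over the ball contributes `vol B(0,r) = r^d vol B(0,1)`.
-/

open MeasureTheory Real Set

theorem setIntegral_le_of_le_const_real {X : Type*} [MeasurableSpace X] {μ : Measure X}
    {f : X → ℝ} {s : Set X} {b : ℝ} (hs : MeasurableSet s) (hμs : μ s ≠ ⊤)
    (hf : ∀ x ∈ s, f x ≤ b) (hfint : IntegrableOn f s μ) :
    ∫ x in s, f x ∂μ ≤ b * μ.real s := by
  simpa [mul_comm] using setIntegral_mono_on hfint (integrableOn_const hμs) hs hf

theorem setIntegral_Ioc_comp_div (f : ℝ → ℝ) {b : ℝ} (hb : 0 < b) :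
    ∫ v in Ioc 0 1, f (v / b) = b * ∫ t in Ioc 0 b⁻¹, f t := by
  rw [← intervalIntegral.integral_of_le zero_le_one,
    ← intervalIntegral.integral_of_le (inv_nonneg.2 hb.le),
    intervalIntegral.integral_comp_div _ hb.ne', zero_div, one_div, smul_eq_mul]

theorem setIntegral_Ioc_one_const_mul_rpow_neg_le {β C T : ℝ} (hβ : 1 < β) (hC : 0 ≤ C) :
    ∫ t in Ioc 1 T, C * t ^ (-β) ≤ C / (β - 1) := by
  have hint : IntegrableOn (fun t : ℝ => C * t ^ (-β)) (Ioi 1) :=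
    (integrableOn_Ioi_rpow_of_lt (by linarith) zero_lt_one).const_mul C
  calc ∫ t in Ioc 1 T, C * t ^ (-β)
      ≤ ∫ t in Ioi 1, C * t ^ (-β) :=
        setIntegral_mono_set hint
          (ae_restrict_of_forall_mem measurableSet_Ioi fun t ht =>
            mul_nonneg hC (rpow_nonneg (zero_le_one.trans ht.le) _))
          Ioc_subset_Ioi_self.eventuallyLE
    _ = C / (β - 1) := by
        rw [integral_const_mul, integral_Ioi_rpow_of_lt (by linarith) zero_lt_one, one_rpow,
          show -β + 1 = -(β - 1) by ring, div_neg, neg_div, neg_neg, mul_one_div]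

section ProfileIntegral

variable {φ : ℝ → ℝ} {c C β T : ℝ}

theorem mul_min_one_le_setIntegral_Ioc (hφ : IntegrableOn φ (Ioc 0 T)) (hT : 0 ≤ T)
    (h0 : ∀ t ∈ Ioc 0 T, 0 ≤ φ t) (hc : ∀ t ∈ Ioc 0 1, c ≤ φ t) :
    c * min T 1 ≤ ∫ t in Ioc 0 T, φ t := by
  have hsub : Ioc 0 (min T 1) ⊆ Ioc 0 T := Ioc_subset_Ioc_right (min_le_left _ _)
  calc c * min T 1 = c * volume.real (Ioc 0 (min T 1)) := by
        rw [volume_real_Ioc_of_le (le_min hT zero_le_one), sub_zero]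
    _ ≤ ∫ t in Ioc 0 (min T 1), φ t :=
        setIntegral_ge_of_const_le_real measurableSet_Ioc measure_Ioc_lt_top.ne
          (fun t ht => hc t ⟨ht.1, ht.2.trans (min_le_right _ _)⟩) (hφ.mono_set hsub)
    _ ≤ ∫ t in Ioc 0 T, φ t :=
        setIntegral_mono_set hφ (ae_restrict_of_forall_mem measurableSet_Ioc h0)
          hsub.eventuallyLE

theorem setIntegral_Ioc_le_mul_min_one (hφ : IntegrableOn φ (Ioc 0 T)) (hT : 0 ≤ T)
    (hβ : 1 < β) (hC : 0 ≤ C) (h1 : ∀ t ∈ Ioc 0 T, φ t ≤ 1)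
    (hdecay : ∀ t ∈ Ioc 1 T, φ t ≤ C * t ^ (-β)) :
    ∫ t in Ioc 0 T, φ t ≤ (1 + C / (β - 1)) * min T 1 := by
  have hK : 1 ≤ 1 + C / (β - 1) := le_add_of_nonneg_right (div_nonneg hC (by linarith))
  rcases le_or_gt T 1 with hT1 | hT1
  · calc ∫ t in Ioc 0 T, φ t ≤ 1 * volume.real (Ioc 0 T) :=
          setIntegral_le_of_le_const_real measurableSet_Ioc measure_Ioc_lt_top.ne h1 hφ
      _ = min T 1 := by rw [volume_real_Ioc_of_le hT, sub_zero, one_mul, min_eq_left hT1]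
      _ ≤ (1 + C / (β - 1)) * min T 1 := le_mul_of_one_le_left (le_min hT zero_le_one) hK
  · have hdecay_int : IntegrableOn (fun t => C * t ^ (-β)) (Ioc 1 T) :=
      (continuousOn_const.mul (continuousOn_id.rpow_const fun t ht =>
        Or.inl (zero_lt_one.trans_le ht.1).ne')).integrableOn_Icc.mono_set Ioc_subset_Icc_self
    rw [← Ioc_union_Ioc_eq_Ioc zero_le_one hT1.le,
      setIntegral_union (Ioc_disjoint_Ioc_of_le le_rfl) measurableSet_Ioc
        (hφ.mono_set (Ioc_subset_Ioc_right hT1.le)) (hφ.mono_set (Ioc_subset_Ioc_left zero_le_one)),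
      min_eq_right hT1.le, mul_one]
    gcongr
    · calc ∫ t in Ioc 0 1, φ t ≤ 1 * volume.real (Ioc (0 : ℝ) 1) :=
            setIntegral_le_of_le_const_real measurableSet_Ioc measure_Ioc_lt_top.ne
              (fun t ht => h1 t ⟨ht.1, ht.2.trans hT1.le⟩)
              (hφ.mono_set (Ioc_subset_Ioc_right hT1.le))
        _ = 1 := by rw [volume_real_Ioc_of_le zero_le_one, sub_zero, one_mul]
    · calc ∫ t in Ioc 1 T, φ t ≤ ∫ t in Ioc 1 T, C * t ^ (-β) :=
            setIntegral_mono_on (hφ.mono_set (Ioc_subset_Ioc_left zero_le_one)) hdecay_int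
              measurableSet_Ioc hdecay
        _ ≤ C / (β - 1) := setIntegral_Ioc_one_const_mul_rpow_neg_le hβ hC

end ProfileIntegral

theorem norm_sub_le_two_mul_norm {E : Type*} [SeminormedAddCommGroup E] {x y : E}
    (h : ‖y‖ ≤ ‖x‖) : ‖x - y‖ ≤ 2 * ‖x‖ := by
  linarith [norm_sub_le x y]

theorem norm_le_two_mul_norm_sub {E : Type*} [SeminormedAddCommGroup E] {x y : E}
    (h : 2 * ‖y‖ ≤ ‖x‖) : ‖x‖ ≤ 2 * ‖x - y‖ := by
  linarith [norm_sub_norm_le x y]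

theorem rpow_neg_le_rpow_mul_rpow_neg {s t k e : ℝ} (hs : 0 < s) (hk : 0 < k) (he : 0 ≤ e)
    (h : s ≤ k * t) : t ^ (-e) ≤ k ^ e * s ^ (-e) := by
  have ht : 0 < t := pos_of_mul_pos_right (hs.trans_le h) hk.le
  calc t ^ (-e) = k ^ e * (k * t) ^ (-e) := by
        rw [mul_rpow hk.le ht.le, ← mul_assoc, ← rpow_add hk, add_neg_cancel, rpow_zero, one_mul]
    _ ≤ k ^ e * s ^ (-e) :=
        mul_le_mul_of_nonneg_left (rpow_le_rpow_of_nonpos hs h (neg_nonpos.2 he)) (by positivity)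

theorem min_one_le_mul_min_one {a b k : ℝ} (hk : 1 ≤ k) (h : a ≤ k * b) :
    min a 1 ≤ k * min b 1 := by
  rw [mul_min_of_nonneg _ _ (zero_le_one.trans hk), mul_one]
  exact min_le_min h hk

section Profile

variable {ρ : ℝ → ℝ} {γ δ c C : ℝ}

theorem profile_rpow_integral_bounds (hρ : Antitone ρ) (hρ01 : ∀ t, 0 ≤ ρ t ∧ ρ t ≤ 1)
    (hρ_bound : ∀ x, 1 ≤ x → c * x ^ (-δ) ≤ ρ x ∧ ρ x ≤ C * x ^ (-δ))
    (hγ : 0 < γ) (hγδ : 1 < γ * δ) {T : ℝ} (hT : 0 ≤ T) :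
    c * min T 1 ≤ ∫ t in Ioc 0 T, ρ (t ^ γ) ∧
      ∫ t in Ioc 0 T, ρ (t ^ γ) ≤ (1 + C / (γ * δ - 1)) * min T 1 := by
  have hC : 0 ≤ C := by simpa using (hρ01 1).1.trans (hρ_bound 1 le_rfl).2
  have hint : IntegrableOn (fun t => ρ (t ^ γ)) (Ioc 0 T) :=
    Measure.integrableOn_of_bounded (M := 1) measure_Ioc_lt_top.ne
      (hρ.measurable.comp (measurable_id.pow_const γ)).aestronglyMeasurable
      (ae_of_all _ fun t => by rw [norm_of_nonneg (hρ01 _).1]; exact (hρ01 _).2)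
  refine ⟨mul_min_one_le_setIntegral_Ioc hint hT (fun t _ => (hρ01 _).1) fun t ht => ?_,
    setIntegral_Ioc_le_mul_min_one hint hT hγδ hC (fun t _ => (hρ01 _).2) fun t ht => ?_⟩
  · calc c = c * 1 ^ (-δ) := by rw [one_rpow, mul_one]
      _ ≤ ρ 1 := (hρ_bound 1 le_rfl).1
      _ ≤ ρ (t ^ γ) := hρ (rpow_le_one ht.1.le ht.2 hγ.le)
  · calc ρ (t ^ γ) ≤ C * (t ^ γ) ^ (-δ) := (hρ_bound _ (one_le_rpow ht.1.le hγ.le)).2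
      _ = C * t ^ (-(γ * δ)) := by rw [← rpow_mul (zero_le_one.trans ht.1.le), mul_neg]

theorem profile_lower_le_upper (hρ : Antitone ρ) (hρ01 : ∀ t, 0 ≤ ρ t ∧ ρ t ≤ 1)
    (hρ_bound : ∀ x, 1 ≤ x → c * x ^ (-δ) ≤ ρ x ∧ ρ x ≤ C * x ^ (-δ))
    (hγ : 0 < γ) (hγδ : 1 < γ * δ) : c ≤ 1 + C / (γ * δ - 1) := by
  obtain ⟨hlo, hhi⟩ := profile_rpow_integral_bounds hρ hρ01 hρ_bound hγ hγδ zero_le_one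
  simpa using hlo.trans hhi

theorem profile_scaled_integral_bounds (hρ : Antitone ρ) (hρ01 : ∀ t, 0 ≤ ρ t ∧ ρ t ≤ 1)
    (hρ_bound : ∀ x, 1 ≤ x → c * x ^ (-δ) ≤ ρ x ∧ ρ x ≤ C * x ^ (-δ))
    (hγ : 0 < γ) (hγδ : 1 < γ * δ) {u w : ℝ} (hu : 0 < u) (hw : 0 < w) :
    c * min (u⁻¹ * w ^ (-γ⁻¹)) 1 ≤ ∫ v in Ioc 0 1, ρ (w * (u * v) ^ γ) ∧
      ∫ v in Ioc 0 1, ρ (w * (u * v) ^ γ) ≤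
        (1 + C / (γ * δ - 1)) * min (u⁻¹ * w ^ (-γ⁻¹)) 1 := by
  set b := u⁻¹ * w ^ (-γ⁻¹)
  have hb : 0 < b := by positivity
  have hscale : EqOn (fun v => ρ (w * (u * v) ^ γ)) (fun v => ρ ((v / b) ^ γ)) (Ioc 0 1) := by
    intro v hv
    have hb_inv : b⁻¹ = u * w ^ γ⁻¹ := by rw [mul_inv, inv_inv, rpow_neg hw.le, inv_inv]
    dsimp only
    rw [div_eq_mul_inv, hb_inv, show v * (u * w ^ γ⁻¹) = (u * v) * w ^ γ⁻¹ by ring,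
      mul_rpow (x := u * v) (mul_nonneg hu.le hv.1.le) (rpow_nonneg hw.le _),
      rpow_inv_rpow hw.le hγ.ne', mul_comm]
  have hmin : b * min b⁻¹ 1 = min b 1 := by
    rw [mul_min_of_nonneg _ _ hb.le, mul_inv_cancel₀ hb.ne', mul_one, min_comm]
  rw [setIntegral_congr_fun measurableSet_Ioc hscale,
    setIntegral_Ioc_comp_div (fun t => ρ (t ^ γ)) hb, ← hmin]
  obtain ⟨hlo, hhi⟩ := profile_rpow_integral_bounds hρ hρ01 hρ_bound hγ hγδ (inv_nonneg.2 hb.le)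
  constructor
  · calc c * (b * min b⁻¹ 1) = b * (c * min b⁻¹ 1) := by ring
      _ ≤ _ := mul_le_mul_of_nonneg_left hlo hb.le
  · calc b * ∫ t in Ioc 0 b⁻¹, ρ (t ^ γ) ≤ b * ((1 + C / (γ * δ - 1)) * min b⁻¹ 1) :=
          mul_le_mul_of_nonneg_left hhi hb.le
      _ = _ := by ring

theorem profile_integral_bounds_of_two_mul_norm_le (hρ : Antitone ρ)
    (hρ01 : ∀ t, 0 ≤ ρ t ∧ ρ t ≤ 1)
    (hρ_bound : ∀ x, 1 ≤ x → c * x ^ (-δ) ≤ ρ x ∧ ρ x ≤ C * x ^ (-δ)) (hc : 0 ≤ c)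
    (hγ : 0 < γ) (hγδ : 1 < γ * δ) (n : ℕ) {u : ℝ} (hu : 0 < u) {E : Type*}
    [SeminormedAddCommGroup E] {x y : E} (hx : 0 < ‖x‖)
    (hxy : 2 * ‖y‖ ≤ ‖x‖) :
    c * (2 ^ (n / γ))⁻¹ * min (u⁻¹ * ‖x‖ ^ (-(n / γ))) 1 ≤
        ∫ v in Ioc 0 1, ρ (‖x - y‖ ^ n * (u * v) ^ γ) ∧
      ∫ v in Ioc 0 1, ρ (‖x - y‖ ^ n * (u * v) ^ γ) ≤
        (1 + C / (γ * δ - 1)) * 2 ^ (n / γ) * min (u⁻¹ * ‖x‖ ^ (-(n / γ))) 1 := by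
  have hpow : (‖x - y‖ ^ n) ^ (-γ⁻¹) = ‖x - y‖ ^ (-(n / γ)) := by
    rw [← rpow_natCast, ← rpow_mul (norm_nonneg _), mul_neg, div_eq_mul_inv]
  set e : ℝ := n / γ
  have he : 0 ≤ e := by positivity
  have hk : 1 ≤ (2 : ℝ) ^ e := one_le_rpow one_le_two he
  have hK : 0 ≤ 1 + C / (γ * δ - 1) :=
    hc.trans (profile_lower_le_upper hρ hρ01 hρ_bound hγ hγδ)
  have hxy_le : ‖x‖ ≤ 2 * ‖x - y‖ := norm_le_two_mul_norm_sub hxy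
  have hxy_ge : ‖x - y‖ ≤ 2 * ‖x‖ := norm_sub_le_two_mul_norm (by linarith [norm_nonneg y])
  have hxy_pos : 0 < ‖x - y‖ := by linarith
  obtain ⟨hlo, hhi⟩ :=
    profile_scaled_integral_bounds hρ hρ01 hρ_bound hγ hγδ hu (pow_pos hxy_pos n)
  rw [hpow] at hlo hhi
  have h_lower : min (u⁻¹ * ‖x‖ ^ (-e)) 1 ≤ 2 ^ e * min (u⁻¹ * ‖x - y‖ ^ (-e)) 1 :=
    min_one_le_mul_min_one hk (by
      rw [mul_left_comm]
      exact mul_le_mul_of_nonneg_left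
        (rpow_neg_le_rpow_mul_rpow_neg hxy_pos two_pos he hxy_ge) (inv_nonneg.2 hu.le))
  have h_upper : min (u⁻¹ * ‖x - y‖ ^ (-e)) 1 ≤ 2 ^ e * min (u⁻¹ * ‖x‖ ^ (-e)) 1 :=
    min_one_le_mul_min_one hk (by
      rw [mul_left_comm]
      exact mul_le_mul_of_nonneg_left
        (rpow_neg_le_rpow_mul_rpow_neg hx two_pos he hxy_le) (inv_nonneg.2 hu.le))
  constructor
  · refine le_trans ?_ hlo
    rw [mul_assoc]
    gcongr
    rwa [inv_mul_le_iff₀ (by positivity)]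
  · calc _ ≤ _ := hhi
      _ ≤ (1 + C / (γ * δ - 1)) * (2 ^ e * min (u⁻¹ * ‖x‖ ^ (-e)) 1) := by gcongr
      _ = _ := by ring

end Profile

open Metric Module

section Ball

variable {E : Type*} [NormedAddCommGroup E] [NormedSpace ℝ E] [FiniteDimensional ℝ E]
  [MeasurableSpace E] [BorelSpace E] (μ : Measure E)
  {ρ : ℝ → ℝ} {γ δ c C : ℝ}

theorem addHaar_real_ball_zero_of_pos [μ.IsAddHaarMeasure] {r : ℝ} (hr : 0 < r) :
    μ.real (ball (0 : E) r) = r ^ finrank ℝ E * μ.real (ball 0 1) := by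
  rw [measureReal_def, Measure.addHaar_ball_of_pos μ 0 hr, ENNReal.toReal_mul,
    ENNReal.toReal_ofReal (by positivity), measureReal_def]

theorem integrableOn_setIntegral_Ioc_profile (hρ : Antitone ρ)
    (hρ01 : ∀ t, 0 ≤ ρ t ∧ ρ t ≤ 1) (x : E) (n : ℕ) (u : ℝ) {s : Set E} (hs : μ s ≠ ⊤) :
    IntegrableOn (fun y => ∫ v in Ioc 0 1, ρ (‖x - y‖ ^ n * (u * v) ^ γ)) s μ := by
  have hmeas : StronglyMeasurable fun p : E × ℝ => ρ (‖x - p.1‖ ^ n * (u * p.2) ^ γ) :=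
    (hρ.measurable.comp (((measurable_const.sub measurable_fst).norm.pow_const n).mul
      ((measurable_const.mul measurable_snd).pow_const γ))).stronglyMeasurable
  refine Measure.integrableOn_of_bounded (M := 1) hs
    (hmeas.integral_prod_right' (ν := volume.restrict (Ioc 0 1))).aestronglyMeasurable
    (ae_of_all _ fun y => ?_)
  calc ‖∫ v in Ioc 0 1, ρ (‖x - y‖ ^ n * (u * v) ^ γ)‖ ≤ 1 * volume.real (Ioc (0 : ℝ) 1) :=
        norm_setIntegral_le_of_norm_le_const measure_Ioc_lt_top fun v _ => by
          rw [norm_of_nonneg (hρ01 _).1]; exact (hρ01 _).2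
    _ = 1 := by rw [volume_real_Ioc_of_le zero_le_one, sub_zero, one_mul]

theorem setIntegral_ball_profile_bounds [μ.IsAddHaarMeasure] (hρ : Antitone ρ)
    (hρ01 : ∀ t, 0 ≤ ρ t ∧ ρ t ≤ 1)
    (hρ_bound : ∀ x, 1 ≤ x → c * x ^ (-δ) ≤ ρ x ∧ ρ x ≤ C * x ^ (-δ)) (hc : 0 ≤ c)
    (hγ : 0 < γ) (hγδ : 1 < γ * δ) (n : ℕ) {u r : ℝ} (hu : 0 < u) (hr : 0 < r) {x : E}
    (hx : 2 * r ≤ ‖x‖) :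
    c * (2 ^ (n / γ))⁻¹ * μ.real (ball 0 1) * (r ^ finrank ℝ E * min (u⁻¹ * ‖x‖ ^ (-(n / γ))) 1)
        ≤ ∫ y in ball 0 r, (∫ v in Ioc 0 1, ρ (‖x - y‖ ^ n * (u * v) ^ γ)) ∂μ ∧
      ∫ y in ball 0 r, (∫ v in Ioc 0 1, ρ (‖x - y‖ ^ n * (u * v) ^ γ)) ∂μ ≤
        (1 + C / (γ * δ - 1)) * 2 ^ (n / γ) * μ.real (ball 0 1) *
          (r ^ finrank ℝ E * min (u⁻¹ * ‖x‖ ^ (-(n / γ))) 1) := by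
  have hint := integrableOn_setIntegral_Ioc_profile (γ := γ) μ hρ hρ01 x n u
    (measure_ball_lt_top (x := 0) (r := r)).ne
  have hbounds := fun y (hy : y ∈ ball (0 : E) r) =>
    profile_integral_bounds_of_two_mul_norm_le hρ hρ01 hρ_bound hc hγ hγδ n hu
      (by linarith) (by rw [mem_ball_zero_iff] at hy; linarith)
  constructor
  · calc _ = c * (2 ^ (n / γ))⁻¹ * min (u⁻¹ * ‖x‖ ^ (-(n / γ))) 1 * μ.real (ball (0 : E) r) := by
          rw [addHaar_real_ball_zero_of_pos μ hr]; ring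
      _ ≤ _ := setIntegral_ge_of_const_le_real measurableSet_ball measure_ball_lt_top.ne
          (fun y hy => (hbounds y hy).1) hint
  · calc _ ≤ (1 + C / (γ * δ - 1)) * 2 ^ (n / γ) * min (u⁻¹ * ‖x‖ ^ (-(n / γ))) 1 *
            μ.real (ball (0 : E) r) :=
          setIntegral_le_of_le_const_real measurableSet_ball measure_ball_lt_top.ne
            (fun y hy => (hbounds y hy).2) hint
      _ = _ := by rw [addHaar_real_ball_zero_of_pos μ hr]; ring

end Ball

theorem AntitoneOn.antitone_comp_max {ρ : ℝ → ℝ} {a : ℝ} (h : AntitoneOn ρ (Ici a)) :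
    Antitone fun t => ρ (max t a) := fun _ _ hst =>
  h (mem_Ici.2 (le_max_right _ _)) (mem_Ici.2 (le_max_right _ _)) (max_le_max_right a hst)

theorem stmt_6_general (d : ℕ) (γ δ : ℝ) (hγ0 : 0 < γ)
    (hδ : 1 / γ < δ)
    (ρ : ℝ → ℝ) (c C : ℝ) (hc : 0 < c)
    (hρ_range : ∀ x : ℝ, 0 ≤ x → 0 ≤ ρ x ∧ ρ x ≤ 1)
    (hρ_mono : AntitoneOn ρ (Ici (0 : ℝ)))
    (hρ_bound : ∀ x : ℝ, 1 ≤ x → c * x ^ (-δ) ≤ ρ x ∧ ρ x ≤ C * x ^ (-δ)) :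
    ∃ c' C' : ℝ, 0 < c' ∧ c' ≤ C' ∧
      ∀ u r R : ℝ, u ∈ Ioc (0 : ℝ) 1 → 1 ≤ r →
        ∀ x : EuclideanSpace ℝ (Fin d), ‖x‖ = R → 2 * r ≤ R →
      c' * (r ^ d * min (u⁻¹ * R ^ (-((d : ℝ) / γ))) 1) ≤
          (∫ y in Metric.ball (0 : EuclideanSpace ℝ (Fin d)) r,
              ∫ v in Ioc (0 : ℝ) 1, ρ (‖x - y‖ ^ d * (u * v) ^ γ)) ∧
      (∫ y in Metric.ball (0 : EuclideanSpace ℝ (Fin d)) r,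
              ∫ v in Ioc (0 : ℝ) 1, ρ (‖x - y‖ ^ d * (u * v) ^ γ)) ≤
          C' * (r ^ d * min (u⁻¹ * R ^ (-((d : ℝ) / γ))) 1) := by
  -- `ρ` is only controlled on `[0, ∞)`; replace it by an antitone function agreeing with it there.
  set ρ' : ℝ → ℝ := fun t => ρ (max t 0)
  have hρ'01 : ∀ t, 0 ≤ ρ' t ∧ ρ' t ≤ 1 := fun t => hρ_range _ (le_max_right t 0)
  have hρ'_bound : ∀ t, 1 ≤ t → c * t ^ (-δ) ≤ ρ' t ∧ ρ' t ≤ C * t ^ (-δ) := fun t ht => by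
    simpa only [ρ', max_eq_left (zero_le_one.trans ht)] using hρ_bound t ht
  have hγδ : 1 < γ * δ := by rwa [div_lt_iff₀ hγ0, mul_comm] at hδ
  have hρ' : Antitone ρ' := hρ_mono.antitone_comp_max
  have hcK := profile_lower_le_upper hρ' hρ'01 hρ'_bound hγ0 hγδ
  set V := volume.real (ball (0 : EuclideanSpace ℝ (Fin d)) 1)
  have hV : 0 < V := ENNReal.toReal_pos (measure_ball_pos _ _ one_pos).ne' measure_ball_lt_top.ne
  have hk : 1 ≤ (2 : ℝ) ^ ((d : ℝ) / γ) := one_le_rpow one_le_two (by positivity)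
  refine ⟨c * (2 ^ ((d : ℝ) / γ))⁻¹ * V, (1 + C / (γ * δ - 1)) * 2 ^ ((d : ℝ) / γ) * V,
    by positivity, ?_, fun u r R hu hr x hx hRr => ?_⟩
  · calc c * (2 ^ ((d : ℝ) / γ))⁻¹ * V ≤ c * 1 * V := by
          gcongr; exact inv_le_one_of_one_le₀ hk
      _ ≤ (1 + C / (γ * δ - 1)) * 2 ^ ((d : ℝ) / γ) * V := by
          rw [mul_one]
          gcongr
          exact hcK.trans (le_mul_of_one_le_right (hc.le.trans hcK) hk)
  have hρ'_eq : ∀ y : EuclideanSpace ℝ (Fin d),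
      ∫ v in Ioc (0 : ℝ) 1, ρ (‖x - y‖ ^ d * (u * v) ^ γ) =
        ∫ v in Ioc (0 : ℝ) 1, ρ' (‖x - y‖ ^ d * (u * v) ^ γ) := fun y =>
    setIntegral_congr_fun measurableSet_Ioc fun v hv => by
      rw [show ρ' _ = ρ (max _ 0) from rfl, max_eq_left (mul_nonneg (pow_nonneg (norm_nonneg _) d)
        (rpow_nonneg (mul_nonneg hu.1.le hv.1.le) γ))]
  simp only [hρ'_eq]
  subst hx
  simpa only [finrank_euclideanSpace_fin] using
    setIntegral_ball_profile_bounds volume hρ' hρ'01 hρ'_bound hc.le hγ0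
      hγδ d hu.1 (zero_lt_one.trans_le hr) hRr

/-- One-edge connection probability from a fixed vertex `(x,u)` with `|x| = R ≥ 2r` to the
ball `B(0,r)`, soft profile, regime `δ > 1/γ`: the expected number of direct connections
is of order `r^d · min(u⁻¹ R^{-d/γ}, 1)`. -/
theorem stmt_6 (d : ℕ) (hd : 1 ≤ d) (γ δ : ℝ) (hγ0 : 0 < γ) (hγ1 : γ < 1)
    (hδ : 1 / γ < δ)
    (ρ : ℝ → ℝ) (c C : ℝ) (hc : 0 < c) (hcC : c ≤ C)
    (hρ_range : ∀ x : ℝ, 0 ≤ x → 0 ≤ ρ x ∧ ρ x ≤ 1)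
    (hρ_mono : AntitoneOn ρ (Ici (0 : ℝ)))
    (hρ_bound : ∀ x : ℝ, 1 ≤ x → c * x ^ (-δ) ≤ ρ x ∧ ρ x ≤ C * x ^ (-δ)) :
    ∃ c' C' : ℝ, 0 < c' ∧ c' ≤ C' ∧
      ∀ u r R : ℝ, u ∈ Ioc (0 : ℝ) 1 → 1 ≤ r →
        ∀ x : EuclideanSpace ℝ (Fin d), ‖x‖ = R → 2 * r ≤ R →
      c' * (r ^ d * min (u⁻¹ * R ^ (-((d : ℝ) / γ))) 1) ≤
          (∫ y in Metric.ball (0 : EuclideanSpace ℝ (Fin d)) r,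
              ∫ v in Ioc (0 : ℝ) 1, ρ (‖x - y‖ ^ d * (u * v) ^ γ)) ∧
      (∫ y in Metric.ball (0 : EuclideanSpace ℝ (Fin d)) r,
              ∫ v in Ioc (0 : ℝ) 1, ρ (‖x - y‖ ^ d * (u * v) ^ γ)) ≤
          C' * (r ^ d * min (u⁻¹ * R ^ (-((d : ℝ) / γ))) 1) :=
  stmt_6_general d γ δ hγ0 hδ ρ c C hc hρ_range hρ_mono hρ_bound
end

section
/- Let d ≥ 1 be an integer, let 0 < γ < 1/2 and set δ = 1/γ − 1 (so δ > 1). Then there exist constants 0 < c' ≤ C' < ∞ (depending only on d and γ) such that for every R ≥ 2 one has c'·R^{d(1−δ)}·log R ≤ ∫_0^1 v^{−γ} · min(v^{−γδ} R^{d(1−δ)}, 1) dv ≤ C'·R^{d(1−δ)}·log R. -/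
/-!
Since `γδ = 1 - γ =: p`, the integrand is `v^(p-1) min(a v^(-p), 1)` with
`a = R^(d(1-δ)) ≤ 1`. The minimum switches at `t = a^(1/p)`: below `t` the integral of
`v^(p-1)` gives `a / p`, above it the integrand is `a / v`, giving `a log(1/t) = -a log a / p`.
Hence the integral equals `a (1 + β log R) / p` with `β = d(δ - 1) > 0`, and
`1 ≤ log R / log 2` absorbs the constant term.
-/

open MeasureTheory Real Set

section
variable {p a : ℝ}

lemma rpow_sub_one_mul_min_eqOn_of_le (hp : 0 < p) (ha : 0 < a) :
    EqOn (fun v : ℝ => v ^ (p - 1) * min (v ^ (-p) * a) 1) (fun v => v ^ (p - 1))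
      (Ioc 0 (a ^ p⁻¹)) := by
  rintro v ⟨hv0, hvt⟩
  have hvp : v ^ p ≤ a := by
    simpa [← rpow_mul ha.le, inv_mul_cancel₀ hp.ne'] using rpow_le_rpow hv0.le hvt hp.le
  have : 1 ≤ v ^ (-p) * a := by
    rwa [rpow_neg hv0.le, le_inv_mul_iff₀ (rpow_pos_of_pos hv0 _), mul_one]
  simp [min_eq_right this]

lemma rpow_sub_one_mul_min_eqOn_of_ge (hp : 0 < p) (ha : 0 < a) :
    EqOn (fun v : ℝ => v ^ (p - 1) * min (v ^ (-p) * a) 1) (fun v => a * v⁻¹)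
      (Ioi (a ^ p⁻¹)) := by
  intro v (hvt : a ^ p⁻¹ < v)
  have hv0 : 0 < v := (rpow_pos_of_pos ha _).trans hvt
  have hvp : a ≤ v ^ p := by
    simpa [← rpow_mul ha.le, inv_mul_cancel₀ hp.ne'] using
      rpow_le_rpow (rpow_pos_of_pos ha _).le hvt.le hp.le
  have : v ^ (-p) * a ≤ 1 := by
    rwa [rpow_neg hv0.le, inv_mul_le_iff₀ (rpow_pos_of_pos hv0 _), mul_one]
  dsimp only
  rw [min_eq_left this, ← mul_assoc, ← rpow_add hv0, show p - 1 + -p = -1 by ring, rpow_neg_one,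
    mul_comm]

lemma setIntegral_rpow_sub_one_mul_min (hp : 0 < p) (ha : 0 < a) (ha1 : a ≤ 1) :
    ∫ v in Ioc (0 : ℝ) 1, v ^ (p - 1) * min (v ^ (-p) * a) 1 = a * (1 - log a) / p := by
  set t := a ^ p⁻¹
  have ht0 : 0 < t := rpow_pos_of_pos ha _
  have ht1 : t ≤ 1 := rpow_le_one ha.le ha1 (inv_pos.2 hp).le
  have htp : t ^ p = a := by rw [← rpow_mul ha.le, inv_mul_cancel₀ hp.ne', rpow_one]
  have hsmall := rpow_sub_one_mul_min_eqOn_of_le hp ha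
  have hlarge : EqOn _ _ (Ioc t 1) :=
    (rpow_sub_one_mul_min_eqOn_of_ge hp ha).mono Ioc_subset_Ioi_self
  have hint_small : IntegrableOn (fun v : ℝ => v ^ (p - 1) * min (v ^ (-p) * a) 1) (Ioc 0 t) :=
    ((intervalIntegral.intervalIntegrable_rpow' (by linarith)).1).congr_fun hsmall.symm
      measurableSet_Ioc
  have hint_large : IntegrableOn (fun v : ℝ => v ^ (p - 1) * min (v ^ (-p) * a) 1) (Ioc t 1) := by
    refine IntegrableOn.congr_fun ?_ hlarge.symm measurableSet_Ioc
    exact (continuousOn_const.mul (continuousOn_inv₀.mono fun x hx => (ht0.trans_le hx.1).ne')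
      ).integrableOn_Icc.mono_set Ioc_subset_Icc_self
  have hI_small : ∫ v in Ioc 0 t, v ^ (p - 1) * min (v ^ (-p) * a) 1 = a / p := by
    rw [setIntegral_congr_fun measurableSet_Ioc hsmall, ← intervalIntegral.integral_of_le ht0.le,
      integral_rpow (Or.inl (by linarith)), sub_add_cancel, zero_rpow hp.ne', sub_zero, htp]
  have hI_large : ∫ v in Ioc t 1, v ^ (p - 1) * min (v ^ (-p) * a) 1 = -(a * log a) / p := by
    rw [setIntegral_congr_fun measurableSet_Ioc hlarge, ← intervalIntegral.integral_of_le ht1,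
      intervalIntegral.integral_const_mul, integral_inv_of_pos ht0 one_pos, one_div, log_inv,
      log_rpow ha]
    field_simp
  rw [← Ioc_union_Ioc_eq_Ioc ht0.le ht1, setIntegral_union (Ioc_disjoint_Ioc_of_le le_rfl)
    measurableSet_Ioc hint_small hint_large, hI_small, hI_large]
  ring

end

/-- The mark integral for two-edge escape paths in the boundary regime `δ = 1/γ - 1`:
`∫_0^1 v^{-γ} min(v^{-γδ} R^{d(1-δ)}, 1) dv ≍ R^{d(1-δ)} log R` for `R ≥ 2`. -/
theorem stmt_10 (d : ℕ) (hd : 1 ≤ d) (γ δ : ℝ) (hγ0 : 0 < γ) (hγ1 : γ < 1 / 2)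
    (hδ : δ = 1 / γ - 1) :
    ∃ c' C' : ℝ, 0 < c' ∧ c' ≤ C' ∧ ∀ R : ℝ, 2 ≤ R →
      c' * (R ^ ((d : ℝ) * (1 - δ)) * Real.log R) ≤
          (∫ v in Ioc (0 : ℝ) 1,
              v ^ (-γ) * min (v ^ (-(γ * δ)) * R ^ ((d : ℝ) * (1 - δ))) 1) ∧
      (∫ v in Ioc (0 : ℝ) 1,
              v ^ (-γ) * min (v ^ (-(γ * δ)) * R ^ ((d : ℝ) * (1 - δ))) 1) ≤
          C' * (R ^ ((d : ℝ) * (1 - δ)) * Real.log R) := by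
  set p := 1 - γ
  have hp : 0 < p := by linarith
  have hγδ : γ * δ = p := by rw [hδ]; field_simp; ring
  have hδ1 : 1 < δ := by rw [hδ, lt_sub_iff_add_lt, lt_div_iff₀ hγ0]; linarith
  set β := (d : ℝ) * (δ - 1)
  have hβ : 0 < β := mul_pos (by exact_mod_cast hd) (by linarith)
  have hlog2 : 0 < log 2 := log_pos one_lt_two
  refine ⟨β / p, (β + (log 2)⁻¹) / p, by positivity, by gcongr; simp [hlog2.le],
    fun R hR => ?_⟩
  have hR0 : 0 < R := by linarith
  set a := R ^ ((d : ℝ) * (1 - δ))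
  have ha : 0 < a := rpow_pos_of_pos hR0 _
  have ha1 : a ≤ 1 := rpow_le_one_of_one_le_of_nonpos (by linarith) (by nlinarith)
  have hloga : log a = -(β * log R) := by rw [log_rpow hR0]; ring
  have hlogR : log 2 ≤ log R := log_le_log two_pos hR
  rw [hγδ, show -γ = p - 1 by ring, setIntegral_rpow_sub_one_mul_min hp ha ha1, hloga]
  have hnum : a * (1 - -(β * log R)) = a + β * (a * log R) := by ring
  have hpos : 0 ≤ a * log R := mul_nonneg ha.le (hlog2.trans_le hlogR).le
  have ha_le : a ≤ (log 2)⁻¹ * (a * log R) := by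
    rw [le_inv_mul_iff₀ hlog2]; nlinarith
  simp only [div_mul_eq_mul_div, hnum]
  constructor <;> gcongr <;> linarith
end

section
/- Let d ≥ 1 be an integer, let 0 < γ < 1 and set δ = 1/γ. Then there exist R₀ ≥ 2 and constants 0 < c' ≤ C' < ∞ (depending only on d and γ) such that for every R ≥ R₀ one has c'·R^{d(1−γ)(1−δ)}·(log R)^{1−γ} ≤ ∫_0^1 v^{−γ} · min(v^{−1} R^{d(1−δ)}(1 + log₊(v R^{dδ})), 1) dv ≤ C'·R^{d(1−γ)(1−δ)}·(log R)^{1−γ}. -/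
/-!
Put `a := R^{d(1-δ)} log R`, which tends to `0` because `d(1-δ) < 0`, and note that
`a^{1-γ} = R^{d(1-γ)(1-δ)} (log R)^{1-γ}`. For `v ≤ a` the one-edge escape probability is capped
at `1` (when `v > R^{d(1-δ)}` the logarithm is at least `d log R`), so the integral is at least
`∫_0^a v^{-γ} dv = a^{1-γ}/(1-γ)`. For `v > a` we use `log₊(v R^{dδ}) ≤ dδ log R`, which bounds the
escape probability by `(1 + dδ) a / v`, and `∫_a^1 v^{-γ} a/v dv ≤ a^{1-γ}/γ`.
-/

open MeasureTheory Real Set Filter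

section CappedIntegral

variable {γ a : ℝ} {φ : ℝ → ℝ}

lemma setIntegral_Ioc_zero_rpow_neg {b : ℝ} (hγ1 : γ < 1) (hb : 0 ≤ b) :
    ∫ v in Ioc 0 b, v ^ (-γ) = (1 - γ)⁻¹ * b ^ (1 - γ) := by
  rw [← intervalIntegral.integral_of_le hb, integral_rpow (Or.inl (by linarith)),
    zero_rpow (by linarith), neg_add_eq_sub]
  ring

lemma setIntegral_Ioc_rpow_neg_one_sub_le (hγ0 : 0 < γ) (ha0 : 0 < a) (ha1 : a ≤ 1) :
    ∫ v in Ioc a 1, v ^ (-1 - γ) ≤ γ⁻¹ * a ^ (-γ) := by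
  have h0 : (0 : ℝ) ∉ uIcc a 1 := by
    rw [uIcc_of_le ha1]
    exact fun h => ha0.not_ge h.1
  rw [← intervalIntegral.integral_of_le ha1,
    integral_rpow (Or.inr ⟨by linarith, h0⟩), show -1 - γ + 1 = -γ by ring, one_rpow]
  have : 0 ≤ γ⁻¹ := by positivity
  rw [div_neg, ← neg_div, neg_sub, div_eq_inv_mul]
  nlinarith

lemma integrableOn_rpow_mul_min_one (hγ1 : γ < 1) (hφ : Measurable φ)
    (hφ0 : ∀ v ∈ Ioc 0 1, 0 ≤ φ v) :
    IntegrableOn (fun v => v ^ (-γ) * min (φ v) 1) (Ioc 0 1) := by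
  have hrpow : IntegrableOn (fun v : ℝ => v ^ (-γ)) (Ioc 0 1) :=
    (intervalIntegrable_iff_integrableOn_Ioc_of_le zero_le_one).mp
      (intervalIntegral.intervalIntegrable_rpow' (by linarith))
  refine hrpow.mono' (by fun_prop) ?_
  filter_upwards [ae_restrict_mem measurableSet_Ioc] with v hv
  have hv0 : 0 ≤ v ^ (-γ) := rpow_nonneg hv.1.le _
  rw [norm_of_nonneg (mul_nonneg hv0 (le_min (hφ0 v hv) zero_le_one))]
  exact mul_le_of_le_one_right hv0 (min_le_right _ _)

lemma le_setIntegral_rpow_mul_min_one (hγ1 : γ < 1) (ha0 : 0 ≤ a) (ha1 : a ≤ 1)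
    (hφ : Measurable φ) (hφ0 : ∀ v ∈ Ioc 0 1, 0 ≤ φ v) (hφ1 : ∀ v ∈ Ioc 0 a, 1 ≤ φ v) :
    (1 - γ)⁻¹ * a ^ (1 - γ) ≤ ∫ v in Ioc 0 1, v ^ (-γ) * min (φ v) 1 :=
  calc (1 - γ)⁻¹ * a ^ (1 - γ) = ∫ v in Ioc 0 a, v ^ (-γ) * min (φ v) 1 := by
        rw [← setIntegral_Ioc_zero_rpow_neg hγ1 ha0]
        refine setIntegral_congr_fun measurableSet_Ioc fun v hv => ?_
        simp only [min_eq_right (hφ1 v hv), mul_one]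
    _ ≤ ∫ v in Ioc 0 1, v ^ (-γ) * min (φ v) 1 := by
        refine setIntegral_mono_set (integrableOn_rpow_mul_min_one hγ1 hφ hφ0) ?_
          (Ioc_subset_Ioc_right ha1).eventuallyLE
        filter_upwards [ae_restrict_mem measurableSet_Ioc] with v hv
        exact mul_nonneg (rpow_nonneg hv.1.le _) (le_min (hφ0 v hv) zero_le_one)

lemma setIntegral_rpow_mul_min_one_le {M : ℝ} (hγ0 : 0 < γ) (hγ1 : γ < 1) (ha0 : 0 < a)
    (ha1 : a ≤ 1) (hφ : Measurable φ) (hφ0 : ∀ v ∈ Ioc 0 1, 0 ≤ φ v) (hM : 0 ≤ M)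
    (hφM : ∀ v ∈ Ioc a 1, φ v ≤ M * a / v) :
    ∫ v in Ioc 0 1, v ^ (-γ) * min (φ v) 1 ≤ ((1 - γ)⁻¹ + M / γ) * a ^ (1 - γ) := by
  have hint := integrableOn_rpow_mul_min_one hγ1 hφ hφ0
  have hsmall : ∫ v in Ioc 0 a, v ^ (-γ) * min (φ v) 1 ≤ (1 - γ)⁻¹ * a ^ (1 - γ) := by
    rw [← setIntegral_Ioc_zero_rpow_neg hγ1 ha0.le]
    refine setIntegral_mono_on (hint.mono_set (Ioc_subset_Ioc_right ha1)) ?_ measurableSet_Ioc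
      fun v hv => mul_le_of_le_one_right (rpow_nonneg hv.1.le _) (min_le_right _ _)
    exact (intervalIntegrable_iff_integrableOn_Ioc_of_le ha0.le).mp
      (intervalIntegral.intervalIntegrable_rpow' (by linarith))
  have hlarge : ∫ v in Ioc a 1, v ^ (-γ) * min (φ v) 1 ≤ M / γ * a ^ (1 - γ) := by
    have hpow : IntegrableOn (fun v : ℝ => v ^ (-1 - γ)) (Ioc a 1) :=
      ((continuousOn_id.rpow_const fun v hv => Or.inl (ha0.trans_le hv.1).ne').integrableOn_Icc
        ).mono_set Ioc_subset_Icc_self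
    calc ∫ v in Ioc a 1, v ^ (-γ) * min (φ v) 1 ≤ ∫ v in Ioc a 1, M * a * v ^ (-1 - γ) := by
          refine setIntegral_mono_on (hint.mono_set (Ioc_subset_Ioc_left ha0.le))
            (hpow.const_mul _) measurableSet_Ioc fun v hv => ?_
          have hv0 : 0 < v := ha0.trans hv.1
          calc v ^ (-γ) * min (φ v) 1 ≤ v ^ (-γ) * (M * a / v) :=
                mul_le_mul_of_nonneg_left ((min_le_left _ _).trans (hφM v hv))
                  (rpow_nonneg hv0.le _)
            _ = M * a * v ^ (-1 - γ) := by
                rw [sub_eq_add_neg, rpow_add hv0, rpow_neg_one]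
                ring
      _ = M * a * ∫ v in Ioc a 1, v ^ (-1 - γ) := integral_const_mul _ _
      _ ≤ M * a * (γ⁻¹ * a ^ (-γ)) := by
          gcongr
          exact setIntegral_Ioc_rpow_neg_one_sub_le hγ0 ha0 ha1
      _ = M / γ * a ^ (1 - γ) := by
          rw [sub_eq_add_neg, rpow_add ha0, rpow_one]
          ring
  rw [← Ioc_union_Ioc_eq_Ioc ha0.le ha1, setIntegral_union (Ioc_disjoint_Ioc_of_le le_rfl)
    measurableSet_Ioc (hint.mono_set (Ioc_subset_Ioc_right ha1))
    (hint.mono_set (Ioc_subset_Ioc_left ha0.le))]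
  linarith

end CappedIntegral

noncomputable def escapeRate (d δ R v : ℝ) : ℝ :=
  v⁻¹ * R ^ (d * (1 - δ)) * (1 + max (log (v * R ^ (d * δ))) 0)

section EscapeRate

variable {d δ R v : ℝ}

lemma measurable_escapeRate (d δ R : ℝ) : Measurable (escapeRate d δ R) := by
  unfold escapeRate
  fun_prop

lemma escapeRate_nonneg (hR : 0 ≤ R) (hv : 0 ≤ v) : 0 ≤ escapeRate d δ R v := by
  unfold escapeRate
  have : 0 ≤ max (log (v * R ^ (d * δ))) 0 := le_max_right _ _
  positivity

lemma one_le_escapeRate (hd : 1 ≤ d) (hR : 1 ≤ R) (hv0 : 0 < v)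
    (hv : v ≤ R ^ (d * (1 - δ)) * log R) : 1 ≤ escapeRate d δ R v := by
  set A := R ^ (d * (1 - δ))
  have hA : 0 < A := by positivity
  have hL : 0 ≤ log R := log_nonneg hR
  have hlog : 0 ≤ max (log (v * R ^ (d * δ))) 0 := le_max_right _ _
  rw [escapeRate, mul_assoc, le_inv_mul_iff₀ hv0, mul_one]
  rcases le_or_gt v A with hvA | hAv
  · nlinarith
  · have hAB : log (A * R ^ (d * δ)) = d * log R := by
      rw [← rpow_add (by linarith), log_rpow (by linarith)]
      ring
    have : log R ≤ log (v * R ^ (d * δ)) :=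
      calc log R ≤ d * log R := le_mul_of_one_le_left hL hd
        _ = log (A * R ^ (d * δ)) := hAB.symm
        _ ≤ log (v * R ^ (d * δ)) := by gcongr
    nlinarith [le_max_left (log (v * R ^ (d * δ))) 0]

lemma escapeRate_le (hdδ : 0 ≤ d * δ) (hR : 0 < R) (hL : 1 ≤ log R) (hv0 : 0 < v)
    (hv1 : v ≤ 1) :
    escapeRate d δ R v ≤ (1 + d * δ) * (R ^ (d * (1 - δ)) * log R) / v := by
  have hlog : max (log (v * R ^ (d * δ))) 0 ≤ d * δ * log R := by
    refine max_le ?_ (by positivity)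
    calc log (v * R ^ (d * δ)) ≤ log (R ^ (d * δ)) := by
          gcongr
          exact mul_le_of_le_one_left (by positivity) hv1
      _ = d * δ * log R := log_rpow hR _
  have hA : 0 ≤ v⁻¹ * R ^ (d * (1 - δ)) := by positivity
  calc escapeRate d δ R v ≤ v⁻¹ * R ^ (d * (1 - δ)) * (1 + d * δ * log R) := by
        unfold escapeRate; gcongr
    _ ≤ v⁻¹ * R ^ (d * (1 - δ)) * ((1 + d * δ) * log R) := by gcongr; nlinarith
    _ = (1 + d * δ) * (R ^ (d * (1 - δ)) * log R) / v := by ring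

end EscapeRate

lemma eventually_rpow_mul_log_le_one {s : ℝ} (hs : s < 0) :
    ∀ᶠ R in atTop, R ^ s * log R ≤ 1 := by
  filter_upwards [(isLittleO_log_rpow_atTop (neg_pos.mpr hs)).tendsto_div_nhds_zero
    |>.eventually_le_const one_pos, eventually_gt_atTop 0] with R hR hR0
  rwa [rpow_neg hR0.le, div_inv_eq_mul, mul_comm] at hR

/-- The mark integral for two-edge escape paths in the boundary regime `δ = 1/γ`:
`∫_0^1 v^{-γ} min(v⁻¹ R^{d(1-δ)}(1 + log₊(v R^{dδ})), 1) dv ≍ R^{d(1-γ)(1-δ)} (log R)^{1-γ}`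
for all sufficiently large `R`. -/
theorem stmt_12 (d : ℕ) (hd : 1 ≤ d) (γ δ : ℝ) (hγ0 : 0 < γ) (hγ1 : γ < 1)
    (hδ : δ = 1 / γ) :
    ∃ R₀ : ℝ, 2 ≤ R₀ ∧ ∃ c' C' : ℝ, 0 < c' ∧ c' ≤ C' ∧ ∀ R : ℝ, R₀ ≤ R →
      c' * (R ^ ((d : ℝ) * (1 - γ) * (1 - δ)) * Real.log R ^ (1 - γ)) ≤
          (∫ v in Ioc (0 : ℝ) 1,
              v ^ (-γ) * min (v⁻¹ * R ^ ((d : ℝ) * (1 - δ)) *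
                  (1 + max (Real.log (v * R ^ ((d : ℝ) * δ))) 0)) 1) ∧
      (∫ v in Ioc (0 : ℝ) 1,
              v ^ (-γ) * min (v⁻¹ * R ^ ((d : ℝ) * (1 - δ)) *
                  (1 + max (Real.log (v * R ^ ((d : ℝ) * δ))) 0)) 1) ≤
          C' * (R ^ ((d : ℝ) * (1 - γ) * (1 - δ)) * Real.log R ^ (1 - γ)) := by
  have hδ1 : 1 < δ := hδ ▸ one_lt_one_div hγ0 hγ1
  have hd1 : (1 : ℝ) ≤ d := by exact_mod_cast hd
  have hdδ : 0 ≤ (d : ℝ) * δ := by positivity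
  have hs : (d : ℝ) * (1 - δ) < 0 := mul_neg_of_pos_of_neg (by linarith) (by linarith)
  obtain ⟨N, hN⟩ := eventually_atTop.mp ((eventually_rpow_mul_log_le_one hs).and
    (tendsto_log_atTop.eventually_ge_atTop 1))
  refine ⟨max N 2, le_max_right _ _, (1 - γ)⁻¹, (1 - γ)⁻¹ + (1 + d * δ) / γ,
    inv_pos.mpr (by linarith), le_add_of_nonneg_right (by positivity), fun R hR => ?_⟩
  obtain ⟨ha1, hL⟩ := hN R (le_of_max_le_left hR)
  have hR1 : 1 ≤ R := by linarith [le_max_right N 2]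
  set a := R ^ ((d : ℝ) * (1 - δ)) * log R
  have ha0 : 0 < a := mul_pos (by positivity) (by linarith)
  have hscale : R ^ ((d : ℝ) * (1 - γ) * (1 - δ)) * log R ^ (1 - γ) = a ^ (1 - γ) := by
    rw [mul_rpow (by positivity) (by linarith), ← rpow_mul (by linarith)]
    ring_nf
  have hφ0 : ∀ v ∈ Ioc (0 : ℝ) 1, 0 ≤ escapeRate d δ R v :=
    fun v hv => escapeRate_nonneg (by linarith) hv.1.le
  rw [hscale]
  exact ⟨le_setIntegral_rpow_mul_min_one hγ1 ha0.le ha1 (measurable_escapeRate _ _ _) hφ0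
      fun v hv => one_le_escapeRate hd1 hR1 hv.1 hv.2,
    setIntegral_rpow_mul_min_one_le hγ0 hγ1 ha0 ha1 (measurable_escapeRate _ _ _) hφ0
      (by positivity) fun v hv => escapeRate_le hdδ (by linarith) hL (ha0.trans hv.1) hv.2⟩
end

section
/- Let d ≥ 1 be an integer, let 0 < γ < 1/2 and let r > 0. Then ∫_{ℝ^d} ∫_0^1 min(v^{−1} r^d |x|^{−d/γ}, 1) · v^{−γ} dv dx = r^{dγ} · ω_d / ((1 − 2γ)(1 − γ)), where the integrand is interpreted as v^{−γ} at x = 0 (a Lebesgue-null set) and ω_d denotes the Lebesgue measure of the unit ball in ℝ^d. -/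
open MeasureTheory Real Set

/-!
The substitution `x = r ^ γ • z` scales the integral by `r ^ (d γ)` and reduces it to `r = 1`.
Writing `G(a) = ∫₀¹ min (a / v) 1 · v ^ (-γ) dv`, the integrand is then `G (‖z‖ ^ (-d/γ))`, and
polar coordinates turn the integral into `d ω_d ∫₀^∞ t ^ (d-1) G (t ^ (-d/γ)) dt`. Now
`G a = 1 / (1 - γ)` for `a ≥ 1`, while for `a < 1` splitting `(0, 1]` at `a` gives
`G a = a ^ (1-γ) / (γ (1-γ)) - a / γ`; so the radial integral is a sum of power integrals over
`(0, 1]` and `(1, ∞)`, the latter convergent precisely because `γ < 1/2`.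
-/

lemma setIntegral_union_of_eqOn {α E : Type*} [MeasurableSpace α] [NormedAddCommGroup E]
    [NormedSpace ℝ E] {μ : Measure α} {s t : Set α} {f g h : α → E} (hst : Disjoint s t)
    (hs : MeasurableSet s) (ht : MeasurableSet t) (hfg : EqOn f g s) (hfh : EqOn f h t)
    (hg : IntegrableOn g s μ) (hh : IntegrableOn h t μ) :
    ∫ x in s ∪ t, f x ∂μ = ∫ x in s, g x ∂μ + ∫ x in t, h x ∂μ := by
  rw [setIntegral_union hst ht (hg.congr_fun hfg.symm hs) (hh.congr_fun hfh.symm ht),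
    setIntegral_congr_fun hs hfg, setIntegral_congr_fun ht hfh]

lemma integral_Ioc_zero_rpow {p b : ℝ} (hp : -1 < p) (hb : 0 ≤ b) :
    ∫ v in Ioc (0 : ℝ) b, v ^ p = b ^ (p + 1) / (p + 1) := by
  rw [← intervalIntegral.integral_of_le hb, integral_rpow (Or.inl hp),
    zero_rpow (by linarith), sub_zero]

lemma integral_Ioi_one_rpow_neg_one_sub {c : ℝ} (hc : 0 < c) :
    ∫ t in Ioi (1 : ℝ), t ^ (-1 - c) = 1 / c := by
  rw [integral_Ioi_rpow_of_lt (by linarith) one_pos, one_rpow,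
    show -1 - c + 1 = -c by ring, div_neg, neg_div, neg_neg]

noncomputable def markAveragedConnection (γ a : ℝ) : ℝ :=
  ∫ v in Ioc (0 : ℝ) 1, min (v⁻¹ * a) 1 * v ^ (-γ)

section MarkAveragedConnection

variable {γ a : ℝ}

lemma markAveragedConnection_of_one_le (hγ : γ < 1) (ha : 1 ≤ a) :
    markAveragedConnection γ a = 1 / (1 - γ) := by
  have h_eq : EqOn (fun v : ℝ => min (v⁻¹ * a) 1 * v ^ (-γ)) (fun v => v ^ (-γ)) (Ioc 0 1) := by
    intro v hv
    have : 1 ≤ v⁻¹ * a := one_le_mul_of_one_le_of_one_le (one_le_inv₀ hv.1 |>.mpr hv.2) ha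
    simp only [min_eq_right this, one_mul]
  rw [markAveragedConnection, setIntegral_congr_fun measurableSet_Ioc h_eq,
    integral_Ioc_zero_rpow (by linarith) zero_le_one, one_rpow, neg_add_eq_sub]

lemma markAveragedConnection_of_lt_one (hγ0 : 0 < γ) (hγ1 : γ < 1) (ha0 : 0 < a) (ha1 : a < 1) :
    markAveragedConnection γ a = a ^ (1 - γ) / (γ * (1 - γ)) - a / γ := by
  have h_small : EqOn (fun v : ℝ => min (v⁻¹ * a) 1 * v ^ (-γ)) (fun v => v ^ (-γ))
      (Ioc 0 a) := by
    intro v hv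
    have : 1 ≤ v⁻¹ * a := by rw [inv_mul_eq_div, one_le_div hv.1]; exact hv.2
    simp only [min_eq_right this, one_mul]
  have h_large : EqOn (fun v : ℝ => min (v⁻¹ * a) 1 * v ^ (-γ)) (fun v => a * v ^ (-γ - 1))
      (Ioc a 1) := by
    intro v hv
    have hv0 : 0 < v := ha0.trans hv.1
    have : v⁻¹ * a ≤ 1 := by rw [inv_mul_eq_div, div_le_one hv0]; exact hv.1.le
    simp only [min_eq_left this, rpow_sub hv0, rpow_one]
    ring
  have h_int_large : IntegrableOn (fun v : ℝ => a * v ^ (-γ - 1)) (Ioc a 1) := by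
    rw [← intervalIntegrable_iff_integrableOn_Ioc_of_le ha1.le]
    exact (intervalIntegral.intervalIntegrable_rpow
      (Or.inr (notMem_uIcc_of_lt ha0 one_pos))).const_mul a
  have h_int_small : IntegrableOn (fun v : ℝ => v ^ (-γ)) (Ioc 0 a) := by
    rw [← intervalIntegrable_iff_integrableOn_Ioc_of_le ha0.le]
    exact intervalIntegral.intervalIntegrable_rpow' (by linarith)
  rw [markAveragedConnection, ← Ioc_union_Ioc_eq_Ioc ha0.le ha1.le,
    setIntegral_union_of_eqOn (Ioc_disjoint_Ioc_of_le le_rfl) measurableSet_Ioc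
      measurableSet_Ioc h_small h_large h_int_small h_int_large,
    integral_Ioc_zero_rpow (by linarith) ha0.le, integral_const_mul,
    ← intervalIntegral.integral_of_le ha1.le,
    integral_rpow (Or.inr ⟨by linarith, notMem_uIcc_of_lt ha0 one_pos⟩), one_rpow,
    sub_add_cancel, neg_add_eq_sub, rpow_neg ha0.le, rpow_sub ha0, rpow_one]
  have : a ^ γ ≠ 0 := (rpow_pos_of_pos ha0 γ).ne'
  have : 1 - γ ≠ 0 := by linarith
  field_simp
  ring

lemma integral_Ioi_rpow_mul_markAveragedConnection {d : ℝ} (hd : 0 < d) (hγ0 : 0 < γ)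
    (hγ : γ < 1 / 2) :
    ∫ t in Ioi (0 : ℝ), t ^ (d - 1) * markAveragedConnection γ (t ^ (-(d / γ))) =
      1 / (d * (1 - 2 * γ) * (1 - γ)) := by
  have hγ1 : γ < 1 := by linarith
  set c₁ := d * (1 - 2 * γ) / γ
  set c₂ := d * (1 - γ) / γ
  have hc₁ : 0 < c₁ := div_pos (mul_pos hd (by linarith)) hγ0
  have hc₂ : 0 < c₂ := div_pos (mul_pos hd (by linarith)) hγ0
  have hq : -(d / γ) < 0 := neg_neg_of_pos (div_pos hd hγ0)
  have h_near : EqOn (fun t : ℝ => t ^ (d - 1) * markAveragedConnection γ (t ^ (-(d / γ))))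
      (fun t => t ^ (d - 1) * (1 / (1 - γ))) (Ioc 0 1) := fun t ht => by
    dsimp only
    rw [markAveragedConnection_of_one_le hγ1
      (one_le_rpow_of_pos_of_le_one_of_nonpos ht.1 ht.2 hq.le)]
  have h_far : EqOn (fun t : ℝ => t ^ (d - 1) * markAveragedConnection γ (t ^ (-(d / γ))))
      (fun t => t ^ (-1 - c₁) / (γ * (1 - γ)) - t ^ (-1 - c₂) / γ) (Ioi 1) := fun t ht => by
    have ht0 : 0 < t := one_pos.trans ht
    dsimp only
    rw [markAveragedConnection_of_lt_one hγ0 hγ1 (rpow_pos_of_pos ht0 _)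
      (rpow_lt_one_of_one_lt_of_neg ht hq), ← rpow_mul ht0.le, mul_sub, mul_div_assoc',
      mul_div_assoc', ← rpow_add ht0, ← rpow_add ht0]
    congr 3 <;> simp only [c₁, c₂] <;> field_simp <;> ring
  have h_int_near : IntegrableOn (fun t : ℝ => t ^ (d - 1) * (1 / (1 - γ))) (Ioc 0 1) := by
    rw [← intervalIntegrable_iff_integrableOn_Ioc_of_le zero_le_one]
    exact (intervalIntegral.intervalIntegrable_rpow' (by linarith)).mul_const _
  have h_int₁ := integrableOn_Ioi_rpow_of_lt (by linarith : -1 - c₁ < -1) one_pos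
  have h_int₂ := integrableOn_Ioi_rpow_of_lt (by linarith : -1 - c₂ < -1) one_pos
  rw [← Ioc_union_Ioi_eq_Ioi zero_le_one,
    setIntegral_union_of_eqOn (Ioc_disjoint_Ioi le_rfl) measurableSet_Ioc measurableSet_Ioi
      h_near h_far h_int_near ((h_int₁.div_const _).sub (h_int₂.div_const _)),
    integral_mul_const, integral_Ioc_zero_rpow (by linarith) zero_le_one,
    integral_sub (h_int₁.div_const _) (h_int₂.div_const _), integral_div, integral_div,
    integral_Ioi_one_rpow_neg_one_sub hc₁, integral_Ioi_one_rpow_neg_one_sub hc₂,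
    one_rpow, sub_add_cancel]
  have : 1 - γ ≠ 0 := by linarith
  have : 1 - 2 * γ ≠ 0 := by linarith
  simp only [c₁, c₂]
  field_simp
  ring

end MarkAveragedConnection

lemma integral_comp_rpow_mul_norm_rpow_neg {E F : Type*} [NormedAddCommGroup E] [NormedSpace ℝ E]
    [FiniteDimensional ℝ E] [MeasurableSpace E] [BorelSpace E] (μ : Measure E)
    [μ.IsAddHaarMeasure] [NormedAddCommGroup F] [NormedSpace ℝ F] (g : ℝ → F) {s : ℝ}
    (hs : 0 ≤ s) (q : ℝ) :
    ∫ x, g (s ^ q * ‖x‖ ^ (-q)) ∂μ = s ^ Module.finrank ℝ E • ∫ x, g (‖x‖ ^ (-q)) ∂μ := by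
  rw [← Measure.integral_comp_inv_smul_of_nonneg μ _ hs]
  congr with x
  rw [norm_smul, norm_inv, norm_of_nonneg hs, mul_rpow (inv_nonneg.2 hs) (norm_nonneg x),
    inv_rpow hs, rpow_neg hs, inv_inv]

/-- Exact identity for the three-edge crossing integral in the regime `δ > 1/γ`:
`∫_{ℝ^d} ∫_0^1 min(v⁻¹ r^d |x|^{-d/γ}, 1) v^{-γ} dv dx = r^{dγ} ω_d / ((1 - 2γ)(1 - γ))`,
where `ω_d` is the Lebesgue measure of the unit ball in `ℝ^d`. (At `x = 0`, a Lebesgue-null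
set, the value of the integrand is immaterial; here `|x|^{-d/γ} = 0` by the `rpow`
convention.) -/
theorem stmt_14 (d : ℕ) (hd : 1 ≤ d) (γ : ℝ) (hγ0 : 0 < γ) (hγ1 : γ < 1 / 2)
    (r : ℝ) (hr : 0 < r) :
    (∫ x : EuclideanSpace ℝ (Fin d),
        ∫ v in Ioc (0 : ℝ) 1,
          min (v⁻¹ * r ^ d * ‖x‖ ^ (-((d : ℝ) / γ))) 1 * v ^ (-γ)) =
      r ^ ((d : ℝ) * γ) *
        (volume (Metric.ball (0 : EuclideanSpace ℝ (Fin d)) 1)).toReal /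
        ((1 - 2 * γ) * (1 - γ)) := by
  have : Nonempty (Fin d) := ⟨⟨0, hd⟩⟩
  have hd₀ : (0 : ℝ) < d := by exact_mod_cast hd
  have h_scale : (r ^ γ) ^ ((d : ℝ) / γ) = r ^ d := by
    rw [← rpow_mul hr.le, mul_div_cancel₀ _ hγ0.ne', rpow_natCast]
  have h_radial : ∫ t in Ioi (0 : ℝ), t ^ (d - 1) • markAveragedConnection γ (t ^ (-(d / γ))) =
      ∫ t in Ioi (0 : ℝ), t ^ ((d : ℝ) - 1) * markAveragedConnection γ (t ^ (-(d / γ))) := by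
    refine setIntegral_congr_fun measurableSet_Ioi fun t _ => ?_
    rw [smul_eq_mul, ← rpow_natCast, Nat.cast_sub hd, Nat.cast_one]
  calc _ = ∫ x : EuclideanSpace ℝ (Fin d),
        markAveragedConnection γ ((r ^ γ) ^ ((d : ℝ) / γ) * ‖x‖ ^ (-((d : ℝ) / γ))) := by
        simp only [h_scale, markAveragedConnection, mul_assoc]
    _ = (r ^ γ) ^ d * (d * (volume.real (Metric.ball (0 : EuclideanSpace ℝ (Fin d)) 1) *
        (1 / (d * (1 - 2 * γ) * (1 - γ))))) := by
        rw [integral_comp_rpow_mul_norm_rpow_neg _ _ (rpow_nonneg hr.le γ),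
          integral_fun_norm_addHaar volume (fun t => markAveragedConnection γ (t ^ _)),
          finrank_euclideanSpace_fin, h_radial,
          integral_Ioi_rpow_mul_markAveragedConnection hd₀ hγ0 hγ1, smul_eq_mul, nsmul_eq_mul,
          smul_eq_mul]
    _ = _ := by
        rw [← rpow_natCast, ← rpow_mul hr.le, mul_comm γ, measureReal_def]
        field_simp
end

section
/- Let d ≥ 1 be an integer and let δ > 1. Then there exist constants 0 < c' ≤ C' < ∞ (depending only on d and δ) such that for every r ≥ 2 one has c'·(log r)^{1/δ} ≤ ∫_{ℝ^d} min(|z|^{−dδ}(1 + log₊(r^d |z|^{dδ})), 1) dz ≤ C'·(log r)^{1/δ}, where the integrand is interpreted as 1 at z = 0 (a Lebesgue-null set). -/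
/-!
In polar coordinates the integral is `d · |B₁| · ∫₀^∞ y^(d-1) φ(y) dy` with
`φ(y) = min(y^(-D) (1 + log₊(s y^D)), 1)`, `D = dδ > d`, `s = r^d`. The profile equals `1` while
`y^D ≤ log s`, which gives the lower bound `(log s)^(d/D) / d`. Beyond `y = 1` it is at most
`y^(-D) (1 + log s + D log y)`, and since `D > d` the weighted tail beyond `T = (1 + log s)^(1/D)`
is `O(T^d)`, as is the part below `T`. Since `log s = d log r` and `d/D = 1/δ`, both bounds are
of order `(log r)^(1/δ)`.
-/

open MeasureTheory Real Set

/-- `crossingProfile (d * δ) (r ^ d) ‖z‖` is the integrand of the theorem. -/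
noncomputable def crossingProfile (D s y : ℝ) : ℝ :=
  min (y ^ (-D) * (1 + max (log (s * y ^ D)) 0)) 1

section Profile

variable {D s y : ℝ}

lemma crossingProfile_le_one : crossingProfile D s y ≤ 1 := min_le_right _ _

lemma crossingProfile_nonneg (hy : 0 ≤ y) : 0 ≤ crossingProfile D s y :=
  le_min (mul_nonneg (rpow_nonneg hy _) (add_nonneg zero_le_one (le_max_right _ _))) zero_le_one

lemma continuousOn_crossingProfile (hs : s ≠ 0) : ContinuousOn (crossingProfile D s) (Ioi 0) := by
  intro y (hy : 0 < y)
  refine ContinuousAt.continuousWithinAt ?_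
  have hpow : ContinuousAt (fun y : ℝ => y ^ D) y := continuousAt_rpow_const _ _ (Or.inl hy.ne')
  have hlog : ContinuousAt (fun y : ℝ => log (s * y ^ D)) y :=
    (continuousAt_const.mul hpow).log (mul_ne_zero hs (rpow_pos_of_pos hy D).ne')
  exact ((continuousAt_rpow_const _ _ (Or.inl hy.ne')).mul
    ((hlog.max continuousAt_const).const_add 1)).min continuousAt_const

lemma crossingProfile_eq_one (hs : 0 < s) (hy : 0 < y) (hyD : y ^ D ≤ log s) :
    crossingProfile D s y = 1 := by
  have hx : 0 < y ^ D := rpow_pos_of_pos hy D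
  refine min_eq_right ?_
  rw [rpow_neg hy.le, le_inv_mul_iff₀ hx, mul_one]
  rcases le_or_gt (y ^ D) 1 with h1 | h1
  · linarith [le_max_right (log (s * y ^ D)) 0]
  · have : log (s * y ^ D) = log s + log (y ^ D) := log_mul hs.ne' hx.ne'
    linarith [le_max_left (log (s * y ^ D)) 0, log_pos h1]

lemma crossingProfile_le_of_one_le (hD : 0 ≤ D) (hs : 1 ≤ s) (hy : 1 ≤ y) :
    crossingProfile D s y ≤ y ^ (-D) * (1 + log s + D * log y) := by
  have hlog : log (s * y ^ D) = log s + D * log y := by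
    rw [log_mul (by positivity) (by positivity), log_rpow (by positivity)]
  have hnonneg : 0 ≤ log s + D * log y :=
    add_nonneg (log_nonneg hs) (mul_nonneg hD (log_nonneg hy))
  rw [crossingProfile, hlog, max_eq_left hnonneg, ← add_assoc]
  exact min_le_left _ _

end Profile

noncomputable def crossingMajorant (n : ℕ) (D s y : ℝ) : ℝ :=
  (1 + log s) * y ^ (-1 - (D - n)) + 2 * D / (D - n) * y ^ (-1 - (D - n) / 2)

section Radial

variable {n : ℕ} {D s : ℝ}

lemma integral_Ioc_pow_sub_one (hn : 1 ≤ n) {b : ℝ} (hb : 0 ≤ b) :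
    ∫ y in Ioc 0 b, y ^ (n - 1) = b ^ n / n := by
  rw [← intervalIntegral.integral_of_le hb, integral_pow, Nat.sub_add_cancel hn,
    zero_pow (by omega), sub_zero, Nat.cast_sub hn, Nat.cast_one, sub_add_cancel]

/-- The logarithm in the profile is absorbed by half of the spare decay `y ^ (n - D)`. -/
lemma pow_mul_crossingProfile_le (hn : 1 ≤ n) (hnD : n < D) (hs : 1 ≤ s) {y : ℝ} (hy : 1 ≤ y) :
    y ^ (n - 1) * crossingProfile D s y ≤ crossingMajorant n D s y := by
  set p := D - n with hp_def
  have hp : 0 < p := sub_pos.mpr hnD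
  have hy0 : 0 < y := one_pos.trans_le hy
  have hD : 0 ≤ D := (Nat.cast_nonneg n).trans hnD.le
  have hlog : log y ≤ 2 / p * y ^ (p / 2) :=
    (log_le_rpow_div hy0.le (half_pos hp)).trans_eq (by field_simp)
  have hweight : y ^ (n - 1) = y ^ ((n : ℝ) - 1) := by
    rw [← rpow_natCast, Nat.cast_sub hn, Nat.cast_one]
  have e1 : y ^ ((n : ℝ) - 1) * y ^ (-D) = y ^ (-1 - p) := by
    rw [← rpow_add hy0, hp_def]; ring_nf
  have e2 : y ^ (-1 - p) * y ^ (p / 2) = y ^ (-1 - p / 2) := by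
    rw [← rpow_add hy0]; ring_nf
  calc y ^ (n - 1) * crossingProfile D s y
      ≤ y ^ ((n : ℝ) - 1) * (y ^ (-D) * (1 + log s + D * (2 / p * y ^ (p / 2)))) := by
        rw [hweight]
        gcongr
        exact (crossingProfile_le_of_one_le hD hs hy).trans (by gcongr)
    _ = (1 + log s) * (y ^ ((n : ℝ) - 1) * y ^ (-D))
          + 2 * D / p * (y ^ ((n : ℝ) - 1) * y ^ (-D) * y ^ (p / 2)) := by ring
    _ = _ := by rw [e1, e2, crossingMajorant]

lemma integrableOn_Ioi_crossingMajorant (hnD : n < D) {T : ℝ} (hT : 0 < T) :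
    IntegrableOn (crossingMajorant n D s) (Ioi T) :=
  ((integrableOn_Ioi_rpow_of_lt (by linarith) hT).const_mul _).add
    ((integrableOn_Ioi_rpow_of_lt (by linarith) hT).const_mul _)

lemma integral_Ioi_crossingMajorant (hnD : n < D) {T : ℝ} (hT : 0 < T) :
    ∫ y in Ioi T, crossingMajorant n D s y =
      (1 + log s) * T ^ (-(D - n)) / (D - n) + 4 * D / (D - n) ^ 2 * T ^ (-((D - n) / 2)) := by
  have h₁ : -1 - (D - n) < -1 := by linarith
  have h₂ : -1 - (D - n) / 2 < -1 := by linarith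
  simp only [crossingMajorant]
  rw [integral_add ((integrableOn_Ioi_rpow_of_lt h₁ hT).const_mul _)
      ((integrableOn_Ioi_rpow_of_lt h₂ hT).const_mul _),
    integral_const_mul, integral_const_mul, integral_Ioi_rpow_of_lt h₁ hT,
    integral_Ioi_rpow_of_lt h₂ hT, show -1 - (D - n) + 1 = -(D - n) by ring,
    show -1 - (D - n) / 2 + 1 = -((D - n) / 2) by ring]
  field_simp
  ring

lemma integrableOn_pow_mul_crossingProfile (hn : 1 ≤ n) (hnD : n < D) (hs : 1 ≤ s) :
    IntegrableOn (fun y => y ^ (n - 1) * crossingProfile D s y) (Ioi 0) := by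
  have hmeas : AEStronglyMeasurable (fun y => y ^ (n - 1) * crossingProfile D s y)
      (volume.restrict (Ioi 0)) :=
    ((continuous_pow _).continuousOn.mul (continuousOn_crossingProfile (by positivity))
      |>.aestronglyMeasurable measurableSet_Ioi)
  rw [← Ioc_union_Ioi_eq_Ioi zero_le_one]
  refine IntegrableOn.union ?_ ?_
  · refine Integrable.mono' (integrableOn_const (C := (1 : ℝ)) (by simp))
      (hmeas.mono_set Ioc_subset_Ioi_self) ?_
    filter_upwards [ae_restrict_mem measurableSet_Ioc] with y ⟨hy0, hy1⟩
    rw [norm_of_nonneg (mul_nonneg (pow_nonneg hy0.le _) (crossingProfile_nonneg hy0.le))]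
    exact mul_le_one₀ (pow_le_one₀ hy0.le hy1) (crossingProfile_nonneg hy0.le)
      crossingProfile_le_one
  · refine Integrable.mono' (integrableOn_Ioi_crossingMajorant (s := s) hnD one_pos)
      (hmeas.mono_set (Ioi_subset_Ioi zero_le_one)) ?_
    filter_upwards [ae_restrict_mem measurableSet_Ioi] with y (hy : 1 < y)
    rw [norm_of_nonneg (mul_nonneg (pow_nonneg (by linarith) _)
      (crossingProfile_nonneg (by linarith)))]
    exact pow_mul_crossingProfile_le hn hnD hs hy.le

lemma integral_pow_mul_crossingProfile_le (hn : 1 ≤ n) (hnD : n < D) (hs : 1 ≤ s) :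
    ∫ y in Ioi 0, y ^ (n - 1) * crossingProfile D s y ≤
      (1 / n + 1 / (D - n) + 4 * D / (D - n) ^ 2) * (1 + log s) ^ (n / D) := by
  have hD : 0 < D := (Nat.cast_nonneg n).trans_lt hnD
  have hint := integrableOn_pow_mul_crossingProfile hn hnD hs
  set a := 1 + log s
  have ha : 1 ≤ a := le_add_of_nonneg_right (log_nonneg hs)
  -- `T ^ D = 1 + log s` makes the head and the tail of the integral both of order `T ^ n`
  set T := a ^ D⁻¹
  have hT : 1 ≤ T := one_le_rpow ha (inv_nonneg.mpr hD.le)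
  have hTD : T ^ D = a := rpow_inv_rpow (by linarith) hD.ne'
  have hTn : T ^ n = a ^ (n / D) := by rw [← rpow_mul_natCast (by linarith), inv_mul_eq_div]
  have haT : a * T ^ (-(D - n)) = T ^ n := by
    rw [← hTD, ← rpow_add (by linarith), ← rpow_natCast]; ring_nf
  have hhead : ∫ y in Ioc 0 T, y ^ (n - 1) * crossingProfile D s y ≤ T ^ n / n := by
    rw [← integral_Ioc_pow_sub_one hn (by linarith)]
    refine setIntegral_mono_on (hint.mono_set Ioc_subset_Ioi_self)
      (continuous_pow _).integrableOn_Ioc measurableSet_Ioc fun y hy => ?_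
    exact mul_le_of_le_one_right (pow_nonneg hy.1.le _) crossingProfile_le_one
  have htail : ∫ y in Ioi T, y ^ (n - 1) * crossingProfile D s y ≤
      T ^ n / (D - n) + 4 * D / (D - n) ^ 2 * T ^ (-((D - n) / 2)) := by
    rw [← haT, ← integral_Ioi_crossingMajorant hnD (zero_lt_one.trans_le hT)]
    exact setIntegral_mono_on (hint.mono_set (Ioi_subset_Ioi (zero_le_one.trans hT)))
      (integrableOn_Ioi_crossingMajorant hnD (zero_lt_one.trans_le hT)) measurableSet_Ioi
      fun y hy => pow_mul_crossingProfile_le hn hnD hs (hT.trans hy.le)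
  have hdecay : T ^ (-((D - n) / 2)) ≤ T ^ n :=
    (rpow_le_one_of_one_le_of_nonpos hT (by linarith)).trans (one_le_pow₀ hT)
  rw [← Ioc_union_Ioi_eq_Ioi (zero_le_one.trans hT), setIntegral_union Ioc_disjoint_Ioi_same
    measurableSet_Ioi (hint.mono_set Ioc_subset_Ioi_self)
    (hint.mono_set (Ioi_subset_Ioi (zero_le_one.trans hT)))]
  calc _ ≤ T ^ n / n + (T ^ n / (D - n) + 4 * D / (D - n) ^ 2 * T ^ n) :=
        add_le_add hhead (htail.trans (by gcongr))
    _ = _ := by rw [← hTn]; ring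

lemma le_integral_pow_mul_crossingProfile (hn : 1 ≤ n) (hnD : n < D) (hs : 1 ≤ s) :
    log s ^ (n / D) / n ≤ ∫ y in Ioi 0, y ^ (n - 1) * crossingProfile D s y := by
  have hD : 0 < D := (Nat.cast_nonneg n).trans_lt hnD
  have hL : 0 ≤ log s := log_nonneg hs
  set R := log s ^ D⁻¹
  have hRD : R ^ D = log s := rpow_inv_rpow hL hD.ne'
  have hRn : R ^ n = log s ^ (n / D) := by rw [← rpow_mul_natCast hL, inv_mul_eq_div]
  calc log s ^ (n / D) / n = ∫ y in Ioc 0 R, y ^ (n - 1) := by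
        rw [integral_Ioc_pow_sub_one hn (rpow_nonneg hL _), hRn]
    _ = ∫ y in Ioc 0 R, y ^ (n - 1) * crossingProfile D s y :=
        setIntegral_congr_fun measurableSet_Ioc fun y ⟨hy0, hyR⟩ => by
          rw [crossingProfile_eq_one (by linarith) hy0 (hRD ▸ rpow_le_rpow hy0.le hyR hD.le),
            mul_one]
    _ ≤ _ := setIntegral_mono_set (integrableOn_pow_mul_crossingProfile hn hnD hs)
        ((ae_restrict_iff' measurableSet_Ioi).2 (ae_of_all _ fun y (hy : 0 < y) =>
          mul_nonneg (pow_nonneg hy.le _) (crossingProfile_nonneg hy.le)))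
        Ioc_subset_Ioi_self.eventuallyLE

end Radial

lemma exists_radial_crossing_bounds {d : ℕ} (hd : 1 ≤ d) {δ : ℝ} (hδ : 1 < δ) :
    ∃ C : ℝ, ∀ r : ℝ, 2 ≤ r →
      log r ^ (1 / δ) / d ≤ ∫ y in Ioi 0, y ^ (d - 1) * crossingProfile (d * δ) (r ^ d) y ∧
      ∫ y in Ioi 0, y ^ (d - 1) * crossingProfile (d * δ) (r ^ d) y ≤ C * log r ^ (1 / δ) := by
  have hd0 : (0 : ℝ) < d := by exact_mod_cast hd
  have hdD : (d : ℝ) < d * δ := lt_mul_of_one_lt_right hd0 hδ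
  have hexp : (d : ℝ) / (d * δ) = 1 / δ := by field_simp
  set C₀ := 1 / (d : ℝ) + 1 / (d * δ - d) + 4 * (d * δ) / (d * δ - d) ^ 2
  refine ⟨C₀ * (d + 2) ^ (1 / δ), fun r hr => ?_⟩
  have hL : 1 / 2 ≤ log r := by
    linarith [log_two_gt_d9, log_le_log two_pos hr]
  have hs : 1 ≤ r ^ d := one_le_pow₀ (by linarith)
  have hlog : log (r ^ d) = d * log r := log_pow r d
  constructor
  · calc log r ^ (1 / δ) / d ≤ (d * log r) ^ (1 / δ) / d := by
          gcongr
          exact le_mul_of_one_le_left (by linarith) (by exact_mod_cast hd)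
      _ = log (r ^ d) ^ (d / (d * δ)) / d := by rw [hlog, hexp]
      _ ≤ _ := le_integral_pow_mul_crossingProfile hd hdD hs
  · calc _ ≤ C₀ * (1 + log (r ^ d)) ^ (d / (d * δ)) :=
          integral_pow_mul_crossingProfile_le hd hdD hs
      _ ≤ C₀ * ((d + 2) * log r) ^ (1 / δ) := by
          rw [hexp, hlog]
          gcongr
          nlinarith
      _ = C₀ * (d + 2) ^ (1 / δ) * log r ^ (1 / δ) := by
          rw [mul_rpow (by positivity) (by linarith), mul_assoc]

/-- Three-edge crossing integral in the boundary regime `δ = 1/γ`: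
`∫_{ℝ^d} min(|z|^{-dδ}(1 + log₊(r^d |z|^{dδ})), 1) dz ≍ (log r)^{1/δ}` for `r ≥ 2`.
(At `z = 0`, a Lebesgue-null set, the value of the integrand is immaterial.) -/
theorem stmt_15 (d : ℕ) (hd : 1 ≤ d) (δ : ℝ) (hδ : 1 < δ) :
    ∃ c' C' : ℝ, 0 < c' ∧ c' ≤ C' ∧ ∀ r : ℝ, 2 ≤ r →
      c' * Real.log r ^ (1 / δ) ≤
          (∫ z : EuclideanSpace ℝ (Fin d),
              min (‖z‖ ^ (-((d : ℝ) * δ)) *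
                (1 + max (Real.log (r ^ d * ‖z‖ ^ ((d : ℝ) * δ))) 0)) 1) ∧
      (∫ z : EuclideanSpace ℝ (Fin d),
              min (‖z‖ ^ (-((d : ℝ) * δ)) *
                (1 + max (Real.log (r ^ d * ‖z‖ ^ ((d : ℝ) * δ))) 0)) 1) ≤
          C' * Real.log r ^ (1 / δ) := by
  obtain ⟨C, hC⟩ := exists_radial_crossing_bounds hd hδ
  have : Nonempty (Fin d) := ⟨⟨0, hd⟩⟩
  set v := volume.real (Metric.ball (0 : EuclideanSpace ℝ (Fin d)) 1)
  have hv : 0 < v :=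
    ENNReal.toReal_pos (Metric.measure_ball_pos volume 0 one_pos).ne' measure_ball_lt_top.ne
  have hbounds : ∀ r : ℝ, 2 ≤ r →
      v * log r ^ (1 / δ) ≤ ∫ z : EuclideanSpace ℝ (Fin d), crossingProfile (d * δ) (r ^ d) ‖z‖ ∧
      ∫ z : EuclideanSpace ℝ (Fin d), crossingProfile (d * δ) (r ^ d) ‖z‖ ≤
        d * v * C * log r ^ (1 / δ) := by
    intro r hr
    obtain ⟨hlower, hupper⟩ := hC r hr
    have hd0 : (0 : ℝ) < d := by exact_mod_cast hd
    rw [integral_fun_norm_addHaar, finrank_euclideanSpace_fin, nsmul_eq_mul, smul_eq_mul]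
    simp only [smul_eq_mul]
    constructor
    · calc v * log r ^ (1 / δ) = d * (v * (log r ^ (1 / δ) / d)) := by field_simp
        _ ≤ _ := by gcongr
    · calc _ ≤ d * (v * (C * log r ^ (1 / δ))) := by gcongr
        _ = _ := by ring
  refine ⟨v, d * v * C, hv, ?_, hbounds⟩
  exact le_of_mul_le_mul_right ((hbounds 2 le_rfl).1.trans (hbounds 2 le_rfl).2) (by positivity)
end
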